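/- arXiv:1705.07304 — 8 statements merged into one kernel-verified Lean document; each statement's English description precedes it below -/
import Mathlib

section
/- Let B be a connected building set on S and let I_1, I_2 ∈ B with I_1 ∩ I_2 ≠ ∅, I_1 ⊄ I_2, I_2 ⊄ I_1 and |(B|_{I_1 ∩ I_2})_max| ≥ 3. Then there exist J_1, J_2 ∈ B, j_1 ∈ J_1 \ J_2, j_2 ∈ J_2 \ J_1, a maximal nested set N of B|_{J_1 ∩ J_2}, and a maximal nested set N′ of B|_{(J_1 △ J_2) \ {j_1, j_2}} (with N′ and (B|_{(J_1 △ J_2) \ {j_1, j_2}})_max understood to be empty if J_1 △ J_2 = {j_1, j_2}), such that J_1 ∩ J_2 ≠ ∅, J_1 ∩ J_2 ∉ B, for each k = 1, 2 the set {J_k} ∪ N ∪ (B|_{J_1 ∩ J_2})_max ∪ N′ ∪ (B|_{(J_1 △ J_2) \ {j_1, j_2}})_max is a nested set of B, and moreover either J_1 ∪ J_2 ⊊ I_1 ∪ I_2 or |(B|_{J_1 ∩ J_2})_max| ≥ 3. -/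
/-- A building set on a nonempty finite set `S`: a finite set of nonempty subsets of `S`
closed under unions of intersecting members, and containing all singletons. -/
def IsBuilding (S : Finset ℕ) (B : Finset (Finset ℕ)) : Prop :=
  (∀ I ∈ B, I ⊆ S ∧ I.Nonempty) ∧
  (∀ I ∈ B, ∀ J ∈ B, (I ∩ J).Nonempty → I ∪ J ∈ B) ∧
  (∀ i ∈ S, ({i} : Finset ℕ) ∈ B)

/-- The set of maximal (by inclusion) elements of `B`. -/
def Bmax (B : Finset (Finset ℕ)) : Finset (Finset ℕ) :=
  B.filter (fun I => ∀ J ∈ B, I ⊆ J → I = J)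

/-- The restriction `B|_C = {I ∈ B : I ⊆ C}`. -/
def restrict (B : Finset (Finset ℕ)) (C : Finset ℕ) : Finset (Finset ℕ) :=
  B.filter (fun I => I ⊆ C)

/-- `N` is a nested set of `B`: a subset of `B \ Bmax B` whose members are pairwise
nested or disjoint, such that no union of `k ≥ 2` pairwise disjoint members lies in `B`. -/
def IsNested (B N : Finset (Finset ℕ)) : Prop :=
  N ⊆ B \ Bmax B ∧
  (∀ I ∈ N, ∀ J ∈ N, I ⊆ J ∨ J ⊆ I ∨ I ∩ J = ∅) ∧
  (∀ F ⊆ N, 2 ≤ F.card → (∀ I ∈ F, ∀ J ∈ F, I ≠ J → I ∩ J = ∅) → F.sup id ∉ B)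

/-- `N` is a maximal (by inclusion) nested set of `B`. -/
def MaxNested (B N : Finset (Finset ℕ)) : Prop :=
  IsNested B N ∧ ∀ N' : Finset (Finset ℕ), IsNested B N' → N ⊆ N' → N = N'

-- basics
lemma mem_Bmax' {B : Finset (Finset ℕ)} {I : Finset ℕ} :
    I ∈ Bmax B ↔ I ∈ B ∧ ∀ J ∈ B, I ⊆ J → I = J := by
  simp [Bmax]

lemma mem_restrict' {B : Finset (Finset ℕ)} {C I : Finset ℕ} :
    I ∈ restrict B C ↔ I ∈ B ∧ I ⊆ C := by
  simp [restrict]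

lemma nested_empty (B : Finset (Finset ℕ)) : IsNested B ∅ := by
  refine ⟨Finset.empty_subset _, by simp, ?_⟩
  intro F hF hcard _
  have : F = ∅ := Finset.subset_empty.mp hF
  simp [this] at hcard

lemma exists_maxNested (B : Finset (Finset ℕ)) : ∃ N, MaxNested B N := by
  classical
  let s : Finset (Finset (Finset ℕ)) := (B \ Bmax B).powerset.filter (fun N => IsNested B N)
  have hne : s.Nonempty := ⟨∅, by simp [s, nested_empty]⟩
  obtain ⟨N, hNs, hmax⟩ := Finset.exists_max_image s (fun N => N.card) hne
  have hNnested : IsNested B N := (Finset.mem_filter.mp hNs).2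
  refine ⟨N, hNnested, ?_⟩
  intro N' hN' hsub
  have hN's : N' ∈ s := Finset.mem_filter.mpr ⟨Finset.mem_powerset.mpr hN'.1, hN'⟩
  exact Finset.eq_of_subset_of_card_le hsub (hmax N' hN's)

lemma exists_part {B' : Finset (Finset ℕ)} {K : Finset ℕ} (hK : K ∈ B') :
    ∃ P ∈ Bmax B', K ⊆ P := by
  classical
  let s : Finset (Finset ℕ) := B'.filter (fun J => K ⊆ J)
  have hne : s.Nonempty := ⟨K, by simp [s, hK]⟩
  obtain ⟨P, hPs, hmax⟩ := Finset.exists_max_image s (fun J => J.card) hne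
  have hPB : P ∈ B' := (Finset.mem_filter.mp hPs).1
  have hKP : K ⊆ P := (Finset.mem_filter.mp hPs).2
  refine ⟨P, mem_Bmax'.mpr ⟨hPB, ?_⟩, hKP⟩
  intro J hJ hPJ
  have hJs : J ∈ s := Finset.mem_filter.mpr ⟨hJ, hKP.trans hPJ⟩
  exact Finset.eq_of_subset_of_card_le hPJ (hmax J hJs)

lemma part_eq_of_subset {B' : Finset (Finset ℕ)} {P Q : Finset ℕ}
    (hP : P ∈ Bmax B') (hQ : Q ∈ B') (h : P ⊆ Q) : P = Q :=
  (mem_Bmax'.mp hP).2 Q hQ h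

lemma notin_of_three_parts {B : Finset (Finset ℕ)} {C : Finset ℕ}
    (h3 : 3 ≤ (Bmax (restrict B C)).card) : C ∉ B := by
  intro hC
  have hsub : Bmax (restrict B C) ⊆ {C} := by
    intro P hP
    have := (mem_Bmax'.mp hP).2 C (mem_restrict'.mpr ⟨hC, le_refl _⟩)
      (mem_restrict'.mp (mem_Bmax'.mp hP).1).2
    simp [this]
  have := Finset.card_le_card hsub
  simp at this
  omega

lemma pair_of_nested {S : Finset ℕ} {B : Finset (Finset ℕ)} (hB : IsBuilding S B)
    {C : Finset ℕ} {N₀ : Finset (Finset ℕ)} (hN₀ : IsNested (restrict B C) N₀)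
    {X Y : Finset ℕ} (hX : X ∈ N₀ ∪ Bmax (restrict B C)) (hY : Y ∈ N₀ ∪ Bmax (restrict B C)) :
    X ⊆ Y ∨ Y ⊆ X ∨ X ∩ Y = ∅ := by
  classical
  by_cases hd : X ∩ Y = ∅
  · exact Or.inr (Or.inr hd)
  have hXR : X ∈ restrict B C := by
    rcases Finset.mem_union.mp hX with h | h
    · exact (Finset.mem_sdiff.mp (hN₀.1 h)).1
    · exact (mem_Bmax'.mp h).1
  have hYR : Y ∈ restrict B C := by
    rcases Finset.mem_union.mp hY with h | h
    · exact (Finset.mem_sdiff.mp (hN₀.1 h)).1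
    · exact (mem_Bmax'.mp h).1
  have hne : (X ∩ Y).Nonempty := Finset.nonempty_iff_ne_empty.mpr hd
  have hXB := mem_restrict'.mp hXR
  have hYB := mem_restrict'.mp hYR
  have hUB : X ∪ Y ∈ restrict B C :=
    mem_restrict'.mpr ⟨hB.2.1 X hXB.1 Y hYB.1 hne, Finset.union_subset hXB.2 hYB.2⟩
  rcases Finset.mem_union.mp hX with hXN | hXM
  · rcases Finset.mem_union.mp hY with hYN | hYM
    · exact hN₀.2.1 X hXN Y hYN
    · have hYeq := part_eq_of_subset hYM hUB Finset.subset_union_right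
      exact Or.inl (by rw [hYeq]; exact Finset.subset_union_left)
  · have hXeq := part_eq_of_subset hXM hUB Finset.subset_union_left
    exact Or.inr (Or.inl (by rw [hXeq]; exact Finset.subset_union_right))

lemma sup_not_in {S : Finset ℕ} {B : Finset (Finset ℕ)} (hB : IsBuilding S B)
    {C : Finset ℕ} {N₀ : Finset (Finset ℕ)} (hN₀ : IsNested (restrict B C) N₀)
    {F : Finset (Finset ℕ)} (hF : F ⊆ N₀ ∪ Bmax (restrict B C)) (hcard : 2 ≤ F.card)
    (hdisj : ∀ I ∈ F, ∀ J ∈ F, I ≠ J → I ∩ J = ∅)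
    (hV : F.sup id ∈ restrict B C) : False := by
  classical
  by_cases hM : ∃ P ∈ F, P ∈ Bmax (restrict B C)
  · obtain ⟨P, hPF, hPM⟩ := hM
    have hPsup : P ⊆ F.sup id := Finset.le_sup (f := id) hPF
    have hPeq : P = F.sup id := part_eq_of_subset hPM hV hPsup
    obtain ⟨X, hXF, hXP⟩ := Finset.exists_mem_ne (s := F) (by omega) P
    have hXsub : X ⊆ F.sup id := Finset.le_sup (f := id) hXF
    have hXne : X.Nonempty := by
      rcases Finset.mem_union.mp (hF hXF) with h | h
      · exact (hB.1 X (mem_restrict'.mp (Finset.mem_sdiff.mp (hN₀.1 h)).1).1).2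
      · exact (hB.1 X (mem_restrict'.mp (mem_Bmax'.mp h).1).1).2
    have hdXP := hdisj X hXF P hPF hXP
    rw [← hPeq] at hXsub
    obtain ⟨x, hx⟩ := hXne
    have : x ∈ X ∩ P := Finset.mem_inter.mpr ⟨hx, hXsub hx⟩
    rw [hdXP] at this
    exact absurd this (Finset.notMem_empty x)
  · push_neg at hM
    have hFN : F ⊆ N₀ := by
      intro X hXF
      rcases Finset.mem_union.mp (hF hXF) with h | h
      · exact h
      · exact absurd h (hM X hXF)
    exact hN₀.2.2 F hFN hcard hdisj hV

set_option maxHeartbeats 1000000 in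
lemma key_lemma {S : Finset ℕ} {B : Finset (Finset ℕ)} (hB : IsBuilding S B)
    (hconn : Bmax B = {S}) {K O : Finset ℕ} (hK : K ∈ B) (hO : O ∈ B)
    (hCne : (K ∩ O).Nonempty) (hCB : K ∩ O ∉ B)
    (hE : ∀ U : Finset ℕ, U.Nonempty → U ⊆ O \ K → U ≠ O \ K → K ∪ U ∉ B)
    (hE' : ∀ U : Finset ℕ, U.Nonempty → U ⊆ K \ O → U ≠ K \ O → O ∪ U ∉ B)
    {j₁ j₂ : ℕ} (hj₁ : j₁ ∈ K \ O) (hj₂ : j₂ ∈ O \ K)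
    {N N' : Finset (Finset ℕ)} (hN : IsNested (restrict B (K ∩ O)) N)
    (hN' : IsNested (restrict B (((K ∪ O) \ (K ∩ O)) \ {j₁, j₂})) N') :
    IsNested B (insert K (N ∪ Bmax (restrict B (K ∩ O)) ∪ N' ∪
      Bmax (restrict B (((K ∪ O) \ (K ∩ O)) \ {j₁, j₂})))) := by
  classical
  set C := K ∩ O with hCdef
  set D := ((K ∪ O) \ (K ∩ O)) \ {j₁, j₂} with hDdef
  have hKS : K ⊆ S := (hB.1 K hK).1
  have hOS : O ⊆ S := (hB.1 O hO).1
  have hSB : S ∈ B := by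
    have : S ∈ Bmax B := by rw [hconn]; exact Finset.mem_singleton_self S
    exact (mem_Bmax'.mp this).1
  have notmax : ∀ X, X ∈ B → X ≠ S → X ∈ B \ Bmax B := by
    intro X hX hne
    rw [Finset.mem_sdiff]
    refine ⟨hX, ?_⟩
    rw [hconn]
    simpa using hne
  have hKneS : K ≠ S := by
    intro h
    apply hCB
    have hOK : O ⊆ K := h ▸ hOS
    have : K ∩ O = O := Finset.inter_eq_right.mpr hOK
    rw [hCdef, this]
    exact hO
  have hCS : C ⊆ S := (Finset.inter_subset_left).trans hKS
  have hCnotS : C ≠ S := by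
    intro h
    exact hCB (h ▸ hSB)
  have hj₁K : j₁ ∈ K := (Finset.mem_sdiff.mp hj₁).1
  have hj₁O : j₁ ∉ O := (Finset.mem_sdiff.mp hj₁).2
  have hj₂O : j₂ ∈ O := (Finset.mem_sdiff.mp hj₂).1
  have hj₂K : j₂ ∉ K := (Finset.mem_sdiff.mp hj₂).2
  have hDmem : ∀ x : ℕ, x ∈ D ↔ ((x ∈ K ∧ x ∉ O) ∨ (x ∈ O ∧ x ∉ K)) ∧ x ≠ j₁ ∧ x ≠ j₂ := by
    intro x
    simp only [hDdef, Finset.mem_sdiff, Finset.mem_union, Finset.mem_inter,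
      Finset.mem_insert, Finset.mem_singleton]
    tauto
  have hj₁D : j₁ ∉ D := by
    intro h
    exact ((hDmem j₁).mp h).2.1 rfl
  have hCD : ∀ x : ℕ, x ∈ C → x ∈ D → False := by
    intro x hxC hxD
    have := ((hDmem x).mp hxD).1
    have hx := Finset.mem_inter.mp hxC
    tauto
  -- one-sidedness of subsets of D that lie in B
  have oneside : ∀ Y : Finset ℕ, Y ∈ B → Y ⊆ D →
      (Y ⊆ K \ O ∧ j₁ ∉ Y) ∨ (Y ⊆ O \ K ∧ j₂ ∉ Y) := by
    intro Y hYB hYD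
    by_cases h1 : ∃ y ∈ Y, y ∈ K
    · by_cases h2 : ∃ y ∈ Y, y ∈ O
      · -- cross: contradiction with hE
        exfalso
        obtain ⟨y1, hy1Y, hy1K⟩ := h1
        obtain ⟨y2, hy2Y, hy2O⟩ := h2
        have hy2K : y2 ∉ K := by
          have := ((hDmem y2).mp (hYD hy2Y)).1
          tauto
        have hKY : (K ∩ Y).Nonempty := ⟨y1, Finset.mem_inter.mpr ⟨hy1K, hy1Y⟩⟩
        have hKUY : K ∪ Y ∈ B := hB.2.1 K hK Y hYB hKY
        set U := Y \ K with hUdef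
        have hUO : U ⊆ O \ K := by
          intro x hx
          have hxY := (Finset.mem_sdiff.mp hx).1
          have hxK := (Finset.mem_sdiff.mp hx).2
          have := ((hDmem x).mp (hYD hxY)).1
          rw [Finset.mem_sdiff]
          refine ⟨by tauto, hxK⟩
        have hUne : U.Nonempty := ⟨y2, Finset.mem_sdiff.mpr ⟨hy2Y, hy2K⟩⟩
        have hUneq : U ≠ O \ K := by
          intro h
          have : j₂ ∈ U := h ▸ hj₂
          have hj₂Y : j₂ ∈ Y := (Finset.mem_sdiff.mp this).1
          exact ((hDmem j₂).mp (hYD hj₂Y)).2.2 rfl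
        have hKU : K ∪ U = K ∪ Y := by
          ext x
          simp only [Finset.mem_union, hUdef, Finset.mem_sdiff]
          tauto
        exact hE U hUne hUO hUneq (hKU ▸ hKUY)
      · -- all of Y in K \ O
        push_neg at h2
        left
        constructor
        · intro x hx
          have hd := ((hDmem x).mp (hYD hx)).1
          have := h2 x hx
          rw [Finset.mem_sdiff]
          tauto
        · intro h
          exact ((hDmem j₁).mp (hYD h)).2.1 rfl
    · push_neg at h1
      right
      constructor
      · intro x hx
        have hd := ((hDmem x).mp (hYD hx)).1
        have := h1 x hx
        rw [Finset.mem_sdiff]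
        tauto
      · intro h
        exact ((hDmem j₂).mp (hYD h)).2.2 rfl
  set M := Bmax (restrict B C) with hMdef
  set M' := Bmax (restrict B D) with hM'def
  set G := N ∪ M ∪ N' ∪ M' with hGdef
  have hGmem : ∀ X ∈ G, (X ∈ N ∪ M ∧ X ∈ restrict B C) ∨ (X ∈ N' ∪ M' ∧ X ∈ restrict B D) := by
    intro X hX
    simp only [hGdef, Finset.mem_union] at hX
    rcases hX with ((h | h) | h) | h
    · exact Or.inl ⟨Finset.mem_union_left _ h, (Finset.mem_sdiff.mp (hN.1 h)).1⟩
    · exact Or.inl ⟨Finset.mem_union_right _ h, (mem_Bmax'.mp h).1⟩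
    · exact Or.inr ⟨Finset.mem_union_left _ h, (Finset.mem_sdiff.mp (hN'.1 h)).1⟩
    · exact Or.inr ⟨Finset.mem_union_right _ h, (mem_Bmax'.mp h).1⟩
  have hKG : K ∉ G := by
    intro h
    rcases hGmem K h with ⟨_, hR⟩ | ⟨_, hR⟩
    · -- K ⊆ C = K ∩ O means K ⊆ O, so C = K ∈ B, contradiction
      have hKC : K ⊆ C := (mem_restrict'.mp hR).2
      have : C = K := Finset.Subset.antisymm Finset.inter_subset_left hKC
      exact hCB (this ▸ hK)
    · have hKD : K ⊆ D := (mem_restrict'.mp hR).2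
      obtain ⟨c, hc⟩ := hCne
      have hcK : c ∈ K := (Finset.mem_inter.mp hc).1
      exact hCD c hc (hKD hcK)
  constructor
  · -- subset of B \ Bmax B
    intro X hX
    rcases Finset.mem_insert.mp hX with rfl | hXG
    · exact notmax X hK hKneS
    · rcases hGmem X hXG with ⟨_, hR⟩ | ⟨_, hR⟩
      · have hXB := mem_restrict'.mp hR
        refine notmax X hXB.1 ?_
        intro h
        exact hCnotS (Finset.Subset.antisymm hCS (h ▸ hXB.2))
      · have hXB := mem_restrict'.mp hR
        refine notmax X hXB.1 ?_
        intro h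
        exact hj₁D (hXB.2 (h ▸ hKS hj₁K))
  refine ⟨?_, ?_⟩
  · -- pairwise nested or disjoint
    intro X hX Y hY
    rcases Finset.mem_insert.mp hX with rfl | hXG
    · rcases Finset.mem_insert.mp hY with rfl | hYG
      · exact Or.inl (Finset.Subset.refl _)
      · rcases hGmem Y hYG with ⟨_, hR⟩ | ⟨_, hR⟩
        · exact Or.inr (Or.inl ((mem_restrict'.mp hR).2.trans Finset.inter_subset_left))
        · have hYB := mem_restrict'.mp hR
          rcases oneside Y hYB.1 hYB.2 with ⟨hs, _⟩ | ⟨hs, _⟩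
          · exact Or.inr (Or.inl (hs.trans (Finset.sdiff_subset)))
          · refine Or.inr (Or.inr (Finset.eq_empty_iff_forall_notMem.mpr ?_))
            intro x hx
            have hx' := Finset.mem_inter.mp hx
            exact (Finset.mem_sdiff.mp (hs hx'.2)).2 hx'.1
    · rcases Finset.mem_insert.mp hY with rfl | hYG
      · rcases hGmem X hXG with ⟨_, hR⟩ | ⟨_, hR⟩
        · exact Or.inl ((mem_restrict'.mp hR).2.trans Finset.inter_subset_left)
        · have hXB := mem_restrict'.mp hR
          rcases oneside X hXB.1 hXB.2 with ⟨hs, _⟩ | ⟨hs, _⟩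
          · exact Or.inl (hs.trans (Finset.sdiff_subset))
          · refine Or.inr (Or.inr (Finset.eq_empty_iff_forall_notMem.mpr ?_))
            intro x hx
            have hx' := Finset.mem_inter.mp hx
            exact (Finset.mem_sdiff.mp (hs hx'.1)).2 (hx'.2)
      · rcases hGmem X hXG with ⟨hXNM, hXR⟩ | ⟨hXNM, hXR⟩ <;>
          rcases hGmem Y hYG with ⟨hYNM, hYR⟩ | ⟨hYNM, hYR⟩
        · exact pair_of_nested hB hN hXNM hYNM
        · refine Or.inr (Or.inr (Finset.eq_empty_iff_forall_notMem.mpr ?_))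
          intro x hx
          have hx' := Finset.mem_inter.mp hx
          exact hCD x ((mem_restrict'.mp hXR).2 hx'.1) ((mem_restrict'.mp hYR).2 hx'.2)
        · refine Or.inr (Or.inr (Finset.eq_empty_iff_forall_notMem.mpr ?_))
          intro x hx
          have hx' := Finset.mem_inter.mp hx
          exact hCD x ((mem_restrict'.mp hYR).2 hx'.2) ((mem_restrict'.mp hXR).2 hx'.1)
        · exact pair_of_nested hB hN' hXNM hYNM
  · -- no disjoint union lies in B
    intro F hF hcard hdisj
    intro hVB
    set V := F.sup id with hVdef
    have hmemV : ∀ x : ℕ, x ∈ V → ∃ Z ∈ F, x ∈ Z := by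
      intro x hx
      rcases Finset.mem_sup.mp hx with ⟨Z, hZF, hxZ⟩
      exact ⟨Z, hZF, hxZ⟩
    by_cases hKF : K ∈ F
    · -- all other elements of F are subsets of (O \ K) \ {j₂}
      have hother : ∀ Z ∈ F, Z ≠ K → Z ⊆ O \ K ∧ j₂ ∉ Z := by
        intro Z hZF hZK
        have hZG : Z ∈ G := by
          rcases Finset.mem_insert.mp (hF hZF) with h | h
          · exact absurd h hZK
          · exact h
        have hdZK : Z ∩ K = ∅ := hdisj Z hZF K hKF hZK
        rcases hGmem Z hZG with ⟨_, hR⟩ | ⟨_, hR⟩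
        · exfalso
          have hZB := mem_restrict'.mp hR
          obtain ⟨z, hz⟩ := (hB.1 Z hZB.1).2
          have hzK : z ∈ K := Finset.inter_subset_left (hZB.2 hz)
          have : z ∈ Z ∩ K := Finset.mem_inter.mpr ⟨hz, hzK⟩
          rw [hdZK] at this
          exact absurd this (Finset.notMem_empty z)
        · have hZB := mem_restrict'.mp hR
          rcases oneside Z hZB.1 hZB.2 with ⟨hs, _⟩ | ⟨hs, hj⟩
          · exfalso
            obtain ⟨z, hz⟩ := (hB.1 Z hZB.1).2
            have hzK : z ∈ K := (Finset.mem_sdiff.mp (hs hz)).1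
            have : z ∈ Z ∩ K := Finset.mem_inter.mpr ⟨hz, hzK⟩
            rw [hdZK] at this
            exact absurd this (Finset.notMem_empty z)
          · exact ⟨hs, hj⟩
      set U := V \ K with hUdef
      have hKV : K ⊆ V := Finset.le_sup (f := id) hKF
      have hUO : U ⊆ O \ K := by
        intro x hx
        have hxV := (Finset.mem_sdiff.mp hx).1
        have hxK := (Finset.mem_sdiff.mp hx).2
        obtain ⟨Z, hZF, hxZ⟩ := hmemV x hxV
        have hZK : Z ≠ K := by
          intro h
          exact hxK (h ▸ hxZ)
        exact (hother Z hZF hZK).1 hxZ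
      have hUne : U.Nonempty := by
        obtain ⟨Z, hZF, hZK⟩ := Finset.exists_mem_ne (s := F) (by omega) K
        have hZG : Z ∈ G := by
          rcases Finset.mem_insert.mp (hF hZF) with h | h
          · exact absurd h hZK
          · exact h
        have hZne : Z.Nonempty := by
          rcases hGmem Z hZG with ⟨_, hR⟩ | ⟨_, hR⟩ <;>
            exact (hB.1 Z (mem_restrict'.mp hR).1).2
        obtain ⟨z, hz⟩ := hZne
        have hzV : z ∈ V := Finset.le_sup (f := id) hZF hz
        have hzK : z ∉ K := (Finset.mem_sdiff.mp ((hother Z hZF hZK).1 hz)).2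
        exact ⟨z, Finset.mem_sdiff.mpr ⟨hzV, hzK⟩⟩
      have hUneq : U ≠ O \ K := by
        intro h
        have hj₂U : j₂ ∈ U := h ▸ hj₂
        have hj₂V : j₂ ∈ V := (Finset.mem_sdiff.mp hj₂U).1
        obtain ⟨Z, hZF, hj₂Z⟩ := hmemV j₂ hj₂V
        have hZK : Z ≠ K := by
          intro hh
          exact hj₂K (hh ▸ hj₂Z)
        exact (hother Z hZF hZK).2 hj₂Z
      have hKUV : K ∪ U = V := by
        ext x
        simp only [Finset.mem_union, hUdef, Finset.mem_sdiff]
        constructor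
        · rintro (h | h)
          · exact hKV h
          · exact h.1
        · intro h
          by_cases hxK : x ∈ K
          · exact Or.inl hxK
          · exact Or.inr ⟨h, hxK⟩
      exact hE U hUne hUO hUneq (hKUV ▸ hVB)
    · -- F ⊆ G
      have hFG : ∀ Z ∈ F, Z ∈ G := by
        intro Z hZF
        rcases Finset.mem_insert.mp (hF hZF) with h | h
        · exact absurd (h ▸ hZF) hKF
        · exact h
      by_cases h1 : ∃ X ∈ F, X ∈ N ∪ M
      · by_cases h2 : ∃ Y ∈ F, Y ∈ N' ∪ M'
        · -- mixed case
          obtain ⟨X, hXF, hXNM⟩ := h1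
          obtain ⟨Y, hYF, hYNM⟩ := h2
          have hXR : X ∈ restrict B C := by
            rcases Finset.mem_union.mp hXNM with h | h
            · exact (Finset.mem_sdiff.mp (hN.1 h)).1
            · exact (mem_Bmax'.mp h).1
          have hYR : Y ∈ restrict B D := by
            rcases Finset.mem_union.mp hYNM with h | h
            · exact (Finset.mem_sdiff.mp (hN'.1 h)).1
            · exact (mem_Bmax'.mp h).1
          -- every element of F is in restrict B C or restrict B D
          have hside : ∀ Z ∈ F, Z ∈ restrict B C ∨ Z ∈ restrict B D := by
            intro Z hZF
            rcases hGmem Z (hFG Z hZF) with ⟨_, hR⟩ | ⟨_, hR⟩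
            · exact Or.inl hR
            · exact Or.inr hR
          have hVK : (V ∩ K).Nonempty := by
            obtain ⟨x, hx⟩ := (hB.1 X (mem_restrict'.mp hXR).1).2
            have hxC : x ∈ C := (mem_restrict'.mp hXR).2 hx
            exact ⟨x, Finset.mem_inter.mpr ⟨Finset.le_sup (f := id) hXF hx,
              Finset.inter_subset_left hxC⟩⟩
          have hVO : (V ∩ O).Nonempty := by
            obtain ⟨x, hx⟩ := (hB.1 X (mem_restrict'.mp hXR).1).2
            have hxC : x ∈ C := (mem_restrict'.mp hXR).2 hx
            exact ⟨x, Finset.mem_inter.mpr ⟨Finset.le_sup (f := id) hXF hx,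
              Finset.inter_subset_right hxC⟩⟩
          by_cases hb : (V ∩ (O \ K)).Nonempty
          · -- use hE with U = V \ K
            set U := V \ K with hUdef
            have hUO : U ⊆ O \ K := by
              intro x hx
              have hxV := (Finset.mem_sdiff.mp hx).1
              have hxK := (Finset.mem_sdiff.mp hx).2
              obtain ⟨Z, hZF, hxZ⟩ := hmemV x hxV
              rcases hside Z hZF with hR | hR
              · exact absurd (Finset.inter_subset_left ((mem_restrict'.mp hR).2 hxZ)) hxK
              · have hZB := mem_restrict'.mp hR
                rcases oneside Z hZB.1 hZB.2 with ⟨hs, _⟩ | ⟨hs, _⟩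
                · exact absurd (Finset.mem_sdiff.mp (hs hxZ)).1 hxK
                · exact hs hxZ
            have hUne : U.Nonempty := by
              obtain ⟨x, hx⟩ := hb
              have := Finset.mem_inter.mp hx
              exact ⟨x, Finset.mem_sdiff.mpr ⟨this.1, (Finset.mem_sdiff.mp this.2).2⟩⟩
            have hUneq : U ≠ O \ K := by
              intro h
              have hj₂U : j₂ ∈ U := h ▸ hj₂
              have hj₂V : j₂ ∈ V := (Finset.mem_sdiff.mp hj₂U).1
              obtain ⟨Z, hZF, hj₂Z⟩ := hmemV j₂ hj₂V
              rcases hside Z hZF with hR | hR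
              · exact hj₂K (Finset.inter_subset_left ((mem_restrict'.mp hR).2 hj₂Z))
              · exact ((hDmem j₂).mp ((mem_restrict'.mp hR).2 hj₂Z)).2.2 rfl
            have hKUV : K ∪ U = K ∪ V := by
              ext x
              simp only [Finset.mem_union, hUdef, Finset.mem_sdiff]
              tauto
            have hKVB : K ∪ V ∈ B := hB.2.1 K hK V hVB
              (by obtain ⟨x, hx⟩ := hVK
                  have := Finset.mem_inter.mp hx
                  exact ⟨x, Finset.mem_inter.mpr ⟨this.2, this.1⟩⟩)
            exact hE U hUne hUO hUneq (hKUV ▸ hKVB)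
          · -- V ∩ (O \ K) empty; use hE' with U = V \ O
            set U := V \ O with hUdef
            have hUK : U ⊆ K \ O := by
              intro x hx
              have hxV := (Finset.mem_sdiff.mp hx).1
              have hxO := (Finset.mem_sdiff.mp hx).2
              obtain ⟨Z, hZF, hxZ⟩ := hmemV x hxV
              rcases hside Z hZF with hR | hR
              · exact absurd (Finset.inter_subset_right ((mem_restrict'.mp hR).2 hxZ)) hxO
              · have hZB := mem_restrict'.mp hR
                rcases oneside Z hZB.1 hZB.2 with ⟨hs, _⟩ | ⟨hs, _⟩
                · exact hs hxZ
                · exact absurd (Finset.mem_sdiff.mp (hs hxZ)).1 hxO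
            have hUne : U.Nonempty := by
              have hYB := mem_restrict'.mp hYR
              rcases oneside Y hYB.1 hYB.2 with ⟨hs, _⟩ | ⟨hs, _⟩
              · obtain ⟨y, hy⟩ := (hB.1 Y hYB.1).2
                have hyV : y ∈ V := Finset.le_sup (f := id) hYF hy
                exact ⟨y, Finset.mem_sdiff.mpr ⟨hyV, (Finset.mem_sdiff.mp (hs hy)).2⟩⟩
              · exfalso
                obtain ⟨y, hy⟩ := (hB.1 Y hYB.1).2
                have hyV : y ∈ V := Finset.le_sup (f := id) hYF hy
                exact hb ⟨y, Finset.mem_inter.mpr ⟨hyV, hs hy⟩⟩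
            have hUneq : U ≠ K \ O := by
              intro h
              have hj₁U : j₁ ∈ U := h ▸ hj₁
              have hj₁V : j₁ ∈ V := (Finset.mem_sdiff.mp hj₁U).1
              obtain ⟨Z, hZF, hj₁Z⟩ := hmemV j₁ hj₁V
              rcases hside Z hZF with hR | hR
              · exact hj₁O (Finset.inter_subset_right ((mem_restrict'.mp hR).2 hj₁Z))
              · exact ((hDmem j₁).mp ((mem_restrict'.mp hR).2 hj₁Z)).2.1 rfl
            have hOUV : O ∪ U = O ∪ V := by
              ext x
              simp only [Finset.mem_union, hUdef, Finset.mem_sdiff]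
              tauto
            have hOVB : O ∪ V ∈ B := hB.2.1 O hO V hVB
              (by obtain ⟨x, hx⟩ := hVO
                  have := Finset.mem_inter.mp hx
                  exact ⟨x, Finset.mem_inter.mpr ⟨this.2, this.1⟩⟩)
            exact hE' U hUne hUK hUneq (hOUV ▸ hOVB)
        · -- F ⊆ N ∪ M
          push_neg at h2
          have hFNM : F ⊆ N ∪ M := by
            intro Z hZF
            rcases hGmem Z (hFG Z hZF) with ⟨h, _⟩ | ⟨h, _⟩
            · exact h
            · exact absurd h (h2 Z hZF)
          have hVC : V ⊆ C := by
            intro x hx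
            obtain ⟨Z, hZF, hxZ⟩ := hmemV x hx
            rcases Finset.mem_union.mp (hFNM hZF) with h | h
            · exact (mem_restrict'.mp (Finset.mem_sdiff.mp (hN.1 h)).1).2 hxZ
            · exact (mem_restrict'.mp (mem_Bmax'.mp h).1).2 hxZ
          exact sup_not_in hB hN hFNM hcard hdisj (mem_restrict'.mpr ⟨hVB, hVC⟩)
      · -- F ⊆ N' ∪ M'
        push_neg at h1
        have hFNM : F ⊆ N' ∪ M' := by
          intro Z hZF
          rcases hGmem Z (hFG Z hZF) with ⟨h, _⟩ | ⟨h, _⟩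
          · exact absurd h (h1 Z hZF)
          · exact h
        have hVD : V ⊆ D := by
          intro x hx
          obtain ⟨Z, hZF, hxZ⟩ := hmemV x hx
          rcases Finset.mem_union.mp (hFNM hZF) with h | h
          · exact (mem_restrict'.mp (Finset.mem_sdiff.mp (hN'.1 h)).1).2 hxZ
          · exact (mem_restrict'.mp (mem_Bmax'.mp h).1).2 hxZ
        exact sup_not_in hB hN' hFNM hcard hdisj (mem_restrict'.mpr ⟨hVB, hVD⟩)

lemma E_of_min_max {B : Finset (Finset ℕ)} {T q1 q2 : Finset ℕ}
    (hq1 : q1 ∈ B) (hq2 : q2 ∈ B) (hqi : (q1 ∩ q2).Nonempty) (hqiB : q1 ∩ q2 ∉ B)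
    (hqT : q1 ∪ q2 ⊆ T)
    (hmin : ∀ a b : Finset ℕ, a ∈ B → b ∈ B → (a ∩ b).Nonempty → a ∩ b ∉ B → a ∪ b ⊆ T →
      (q1 ∪ q2).card ≤ (a ∪ b).card)
    (hmaxI : ∀ a b : Finset ℕ, a ∈ B → b ∈ B → (a ∩ b).Nonempty → a ∩ b ∉ B → a ∪ b ⊆ T →
      (a ∪ b).card = (q1 ∪ q2).card → (a ∩ b).card ≤ (q1 ∩ q2).card) :
    ∀ U : Finset ℕ, U.Nonempty → U ⊆ q2 \ q1 → U ≠ q2 \ q1 → q1 ∪ U ∉ B := by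
  intro U hUne hUs hUneq hUB
  have hUq1 : ∀ u ∈ U, u ∉ q1 := fun u hu => (Finset.mem_sdiff.mp (hUs hu)).2
  have hUq2 : ∀ u ∈ U, u ∈ q2 := fun u hu => (Finset.mem_sdiff.mp (hUs hu)).1
  obtain ⟨x, hxQ, hxU⟩ := Finset.exists_of_ssubset (HasSubset.Subset.ssubset_of_ne hUs hUneq)
  have hxq2 : x ∈ q2 := (Finset.mem_sdiff.mp hxQ).1
  have hxq1 : x ∉ q1 := (Finset.mem_sdiff.mp hxQ).2
  have hCU_not : (q1 ∩ q2) ∪ U ∉ B := by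
    intro hCU
    have hint : ((q1 ∩ q2) ∪ U) ∩ q1 = q1 ∩ q2 := by
      ext y
      simp only [Finset.mem_inter, Finset.mem_union]
      constructor
      · rintro ⟨h1 | h1, h2⟩
        · exact h1
        · exact absurd h2 (hUq1 y h1)
      · intro h
        exact ⟨Or.inl h, h.1⟩
    have heq : ((q1 ∩ q2) ∪ U) ∪ q1 = q1 ∪ U := by
      ext y
      simp only [Finset.mem_union, Finset.mem_inter]
      tauto
    have h3 : ((q1 ∩ q2) ∪ U) ∪ q1 ⊆ T := by
      rw [heq]
      exact Finset.union_subset ((Finset.subset_union_left).trans hqT)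
        (fun u hu => hqT (Finset.mem_union_right _ (hUq2 u hu)))
    have hmin' := hmin ((q1 ∩ q2) ∪ U) q1 hCU hq1 (by rw [hint]; exact hqi)
      (by rw [hint]; exact hqiB) h3
    rw [heq] at hmin'
    have hss : q1 ∪ U ⊂ q1 ∪ q2 := by
      constructor
      · exact Finset.union_subset Finset.subset_union_left
          (fun u hu => Finset.mem_union_right _ (hUq2 u hu))
      · intro h
        have : x ∈ q1 ∪ U := h (Finset.mem_union_right _ hxq2)
        rcases Finset.mem_union.mp this with h' | h'
        · exact hxq1 h'
        · exact hxU h'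
    have := Finset.card_lt_card hss
    omega
  -- the improved pair (q1 ∪ U, q2)
  have hi2 : (q1 ∪ U) ∩ q2 = (q1 ∩ q2) ∪ U := by
    ext y
    simp only [Finset.mem_inter, Finset.mem_union]
    constructor
    · rintro ⟨h1 | h1, h2⟩
      · exact Or.inl ⟨h1, h2⟩
      · exact Or.inr h1
    · rintro (h | h)
      · exact ⟨Or.inl h.1, h.2⟩
      · exact ⟨Or.inr h, hUq2 y h⟩
  have hu2 : (q1 ∪ U) ∪ q2 = q1 ∪ q2 := by
    ext y
    simp only [Finset.mem_union]
    constructor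
    · rintro ((h | h) | h)
      · exact Or.inl h
      · exact Or.inr (hUq2 y h)
      · exact Or.inr h
    · rintro (h | h)
      · exact Or.inl (Or.inl h)
      · exact Or.inr h
  have hle := hmaxI (q1 ∪ U) q2 hUB hq2
    (by rw [hi2]; exact hqi.mono Finset.subset_union_left)
    (by rw [hi2]; exact hCU_not)
    (by rw [hu2]; exact hqT)
    (by rw [hu2])
  rw [hi2] at hle
  have hss : q1 ∩ q2 ⊂ (q1 ∩ q2) ∪ U := by
    constructor
    · exact Finset.subset_union_left
    · intro h
      obtain ⟨u, hu⟩ := hUne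
      have := h (Finset.mem_union_right _ hu)
      exact hUq1 u hu (Finset.mem_inter.mp this).1
  have := Finset.card_lt_card hss
  omega

set_option maxHeartbeats 1000000 in
lemma E_of_stuck {S : Finset ℕ} {B : Finset (Finset ℕ)} (hB : IsBuilding S B)
    {T q1 q2 : Finset ℕ}
    (hq1 : q1 ∈ B) (hq2 : q2 ∈ B) (hqi : (q1 ∩ q2).Nonempty) (hqiB : q1 ∩ q2 ∉ B)
    (hqT : q1 ∪ q2 ⊆ T)
    (hAll : ∀ a b : Finset ℕ, a ∈ B → b ∈ B → (a ∩ b).Nonempty → a ∩ b ∉ B → a ∪ b ⊆ T →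
      a ∪ b = T)
    (hmaxI : ∀ a b : Finset ℕ, a ∈ B → b ∈ B → (a ∩ b).Nonempty → a ∩ b ∉ B → a ∪ b ⊆ T →
      3 ≤ (Bmax (restrict B (a ∩ b))).card → (a ∩ b).card ≤ (q1 ∩ q2).card)
    (hq3 : 3 ≤ (Bmax (restrict B (q1 ∩ q2))).card) :
    ∀ U : Finset ℕ, U.Nonempty → U ⊆ q2 \ q1 → U ≠ q2 \ q1 → q1 ∪ U ∉ B := by
  classical
  intro U hUne hUs hUneq hUB
  have hUq1 : ∀ u ∈ U, u ∉ q1 := fun u hu => (Finset.mem_sdiff.mp (hUs hu)).2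
  have hUq2 : ∀ u ∈ U, u ∈ q2 := fun u hu => (Finset.mem_sdiff.mp (hUs hu)).1
  obtain ⟨x, hxQ, hxU⟩ := Finset.exists_of_ssubset (HasSubset.Subset.ssubset_of_ne hUs hUneq)
  have hxq2 : x ∈ q2 := (Finset.mem_sdiff.mp hxQ).1
  have hxq1 : x ∉ q1 := (Finset.mem_sdiff.mp hxQ).2
  have hxT : x ∈ T := hqT (Finset.mem_union_right _ hxq2)
  set C := q1 ∩ q2 with hCdef
  have hCq1 : C ⊆ q1 := Finset.inter_subset_left
  have hCU_not : C ∪ U ∉ B := by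
    intro hCU
    have hint : (C ∪ U) ∩ q1 = C := by
      ext y
      simp only [Finset.mem_inter, Finset.mem_union, hCdef]
      constructor
      · rintro ⟨h1 | h1, h2⟩
        · exact h1
        · exact absurd h2 (hUq1 y h1)
      · intro h
        exact ⟨Or.inl h, h.1⟩
    have h3 : (C ∪ U) ∪ q1 ⊆ T := by
      refine Finset.union_subset (Finset.union_subset ?_ ?_) ?_
      · exact (hCq1.trans Finset.subset_union_left).trans hqT
      · exact fun u hu => hqT (Finset.mem_union_right _ (hUq2 u hu))
      · exact Finset.subset_union_left.trans hqT
    have hT := hAll (C ∪ U) q1 hCU hq1 (by rw [hint]; exact hqi) (by rw [hint]; exact hqiB) h3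
    have : x ∈ (C ∪ U) ∪ q1 := hT ▸ hxT
    rcases Finset.mem_union.mp this with h | h
    · rcases Finset.mem_union.mp h with h' | h'
      · exact hxq1 (hCq1 h')
      · exact hxU h'
    · exact hxq1 h
  have hi2 : (q1 ∪ U) ∩ q2 = C ∪ U := by
    ext y
    simp only [Finset.mem_inter, Finset.mem_union, hCdef]
    constructor
    · rintro ⟨h1 | h1, h2⟩
      · exact Or.inl ⟨h1, h2⟩
      · exact Or.inr h1
    · rintro (h | h)
      · exact ⟨Or.inl h.1, h.2⟩
      · exact ⟨Or.inr h, hUq2 y h⟩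
  have hu2 : (q1 ∪ U) ∪ q2 = q1 ∪ q2 := by
    ext y
    simp only [Finset.mem_union]
    constructor
    · rintro ((h | h) | h)
      · exact Or.inl h
      · exact Or.inr (hUq2 y h)
      · exact Or.inr h
    · rintro (h | h)
      · exact Or.inl (Or.inl h)
      · exact Or.inr h
  -- the new intersection has at least 3 maximal parts
  have hparts : 3 ≤ (Bmax (restrict B (C ∪ U))).card := by
    by_contra hle
    push_neg at hle
    have hcard2 : (Bmax (restrict B (C ∪ U))).card < (Bmax (restrict B C)).card := by omega
    set f : Finset ℕ → Finset ℕ := fun Q =>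
      if hQ : Q ∈ restrict B (C ∪ U) then (exists_part hQ).choose else ∅ with hfdef
    have hmapsto : ∀ Q ∈ Bmax (restrict B C), f Q ∈ Bmax (restrict B (C ∪ U)) ∧ Q ⊆ f Q := by
      intro Q hQ
      have hQR := (mem_Bmax'.mp hQ).1
      have hQR' : Q ∈ restrict B (C ∪ U) := mem_restrict'.mpr
        ⟨(mem_restrict'.mp hQR).1, (mem_restrict'.mp hQR).2.trans Finset.subset_union_left⟩
      have hspec := (exists_part hQR').choose_spec
      rw [hfdef]
      simp only [dif_pos hQR']
      exact hspec
    obtain ⟨Q1, hQ1, Q2, hQ2, hQne, hfeq⟩ :=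
      Finset.exists_ne_map_eq_of_card_lt_of_maps_to hcard2 (fun Q hQ => (hmapsto Q hQ).1)
    set P := f Q1 with hPdef
    have hPmax : P ∈ Bmax (restrict B (C ∪ U)) := (hmapsto Q1 hQ1).1
    have hQ1P : Q1 ⊆ P := (hmapsto Q1 hQ1).2
    have hQ2P : Q2 ⊆ P := hfeq ▸ (hmapsto Q2 hQ2).2
    have hPR := mem_restrict'.mp (mem_Bmax'.mp hPmax).1
    have hQ1R := mem_restrict'.mp (mem_Bmax'.mp hQ1).1
    have hQ2R := mem_restrict'.mp (mem_Bmax'.mp hQ2).1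
    have hQ1ne : Q1.Nonempty := (hB.1 Q1 hQ1R.1).2
    have hPC_not : P ∩ C ∉ B := by
      intro hPC
      have hPCR : P ∩ C ∈ restrict B C := mem_restrict'.mpr ⟨hPC, Finset.inter_subset_right⟩
      obtain ⟨Q0, hQ0, hsub⟩ := exists_part hPCR
      have h1 : Q1 ⊆ P ∩ C := fun y hy => Finset.mem_inter.mpr ⟨hQ1P hy, hQ1R.2 hy⟩
      have h2 : Q2 ⊆ P ∩ C := fun y hy => Finset.mem_inter.mpr ⟨hQ2P hy, hQ2R.2 hy⟩
      have e1 : Q1 = Q0 := part_eq_of_subset hQ1 (mem_Bmax'.mp hQ0).1 (h1.trans hsub)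
      have e2 : Q2 = Q0 := part_eq_of_subset hQ2 (mem_Bmax'.mp hQ0).1 (h2.trans hsub)
      exact hQne (e1.trans e2.symm)
    have hPCne : (P ∩ C).Nonempty := by
      obtain ⟨y, hy⟩ := hQ1ne
      exact ⟨y, Finset.mem_inter.mpr ⟨hQ1P hy, hQ1R.2 hy⟩⟩
    have hPq1 : P ∩ q1 = P ∩ C := by
      ext y
      simp only [Finset.mem_inter]
      constructor
      · rintro ⟨h1, h2⟩
        refine ⟨h1, ?_⟩
        rcases Finset.mem_union.mp (hPR.2 h1) with h | h
        · exact h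
        · exact absurd h2 (hUq1 y h)
      · rintro ⟨h1, h2⟩
        exact ⟨h1, hCq1 (by exact h2)⟩
    have hPT : P ∪ q1 ⊆ T := by
      refine Finset.union_subset ?_ (Finset.subset_union_left.trans hqT)
      intro y hy
      rcases Finset.mem_union.mp (hPR.2 hy) with h | h
      · exact hqT (Finset.mem_union_left _ (hCq1 h))
      · exact hqT (Finset.mem_union_right _ (hUq2 y h))
    have hT := hAll P q1 hPR.1 hq1 (by rw [hPq1]; exact hPCne) (by rw [hPq1]; exact hPC_not) hPT
    have : x ∈ P ∪ q1 := hT ▸ hxT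
    rcases Finset.mem_union.mp this with h | h
    · rcases Finset.mem_union.mp (hPR.2 h) with h' | h'
      · exact hxq1 (hCq1 h')
      · exact hxU h'
    · exact hxq1 h
  have hle := hmaxI (q1 ∪ U) q2 hUB hq2
    (by rw [hi2]; exact hqi.mono Finset.subset_union_left)
    (by rw [hi2]; exact hCU_not)
    (by rw [hu2]; exact hqT)
    (by rw [hi2]; exact hparts)
  rw [hi2] at hle
  have hss : C ⊂ C ∪ U := by
    constructor
    · exact Finset.subset_union_left
    · intro h
      obtain ⟨u, hu⟩ := hUne
      have := h (Finset.mem_union_right _ hu)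
      exact hUq1 u hu (Finset.mem_inter.mp this).1
  have := Finset.card_lt_card hss
  omega

set_option maxHeartbeats 1000000 in
lemma selection {S : Finset ℕ} {B : Finset (Finset ℕ)} (hB : IsBuilding S B)
    {I₁ I₂ : Finset ℕ} (hI₁ : I₁ ∈ B) (hI₂ : I₂ ∈ B) (hint : (I₁ ∩ I₂).Nonempty)
    (hmax3 : 3 ≤ (Bmax (restrict B (I₁ ∩ I₂))).card) :
    ∃ J₁ J₂ : Finset ℕ, J₁ ∈ B ∧ J₂ ∈ B ∧ (J₁ ∩ J₂).Nonempty ∧ J₁ ∩ J₂ ∉ B ∧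
      (∀ U : Finset ℕ, U.Nonempty → U ⊆ J₂ \ J₁ → U ≠ J₂ \ J₁ → J₁ ∪ U ∉ B) ∧
      (∀ U : Finset ℕ, U.Nonempty → U ⊆ J₁ \ J₂ → U ≠ J₁ \ J₂ → J₂ ∪ U ∉ B) ∧
      (J₁ ∪ J₂ ⊂ I₁ ∪ I₂ ∨ 3 ≤ (Bmax (restrict B (J₁ ∩ J₂))).card) := by
  classical
  set T := I₁ ∪ I₂ with hTdef
  set GP : Finset (Finset ℕ × Finset ℕ) :=
    (B ×ˢ B).filter (fun p => (p.1 ∩ p.2).Nonempty ∧ p.1 ∩ p.2 ∉ B ∧ p.1 ∪ p.2 ⊆ T)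
    with hGPdef
  have hGPmem : ∀ p : Finset ℕ × Finset ℕ, p ∈ GP ↔
      p.1 ∈ B ∧ p.2 ∈ B ∧ (p.1 ∩ p.2).Nonempty ∧ p.1 ∩ p.2 ∉ B ∧ p.1 ∪ p.2 ⊆ T := by
    intro p
    rw [hGPdef, Finset.mem_filter, Finset.mem_product]
    tauto
  have hIGP : (I₁, I₂) ∈ GP := by
    rw [hGPmem]
    exact ⟨hI₁, hI₂, hint, notin_of_three_parts hmax3, Finset.Subset.refl _⟩
  obtain ⟨p₀, hp₀, hp₀min⟩ := Finset.exists_min_image GP (fun p => (p.1 ∪ p.2).card)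
    ⟨(I₁, I₂), hIGP⟩
  by_cases hlt : (p₀.1 ∪ p₀.2).card < T.card
  · -- Case A: a strictly smaller union exists
    set pool := GP.filter (fun p => (p.1 ∪ p.2).card = (p₀.1 ∪ p₀.2).card) with hpooldef
    have hp₀pool : p₀ ∈ pool := by
      rw [hpooldef, Finset.mem_filter]
      exact ⟨hp₀, rfl⟩
    obtain ⟨q, hqpool, hqmax⟩ := Finset.exists_max_image pool (fun p => (p.1 ∩ p.2).card)
      ⟨p₀, hp₀pool⟩
    have hqGP : q ∈ GP := (Finset.mem_filter.mp hqpool).1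
    have hqcard : (q.1 ∪ q.2).card = (p₀.1 ∪ p₀.2).card := (Finset.mem_filter.mp hqpool).2
    obtain ⟨hq1, hq2, hqi, hqiB, hqT⟩ := (hGPmem q).mp hqGP
    have hmin : ∀ a b : Finset ℕ, a ∈ B → b ∈ B → (a ∩ b).Nonempty → a ∩ b ∉ B → a ∪ b ⊆ T →
        (q.1 ∪ q.2).card ≤ (a ∪ b).card := by
      intro a b ha hb h1 h2 h3
      rw [hqcard]
      exact hp₀min (a, b) ((hGPmem (a, b)).mpr ⟨ha, hb, h1, h2, h3⟩)
    have hmaxI : ∀ a b : Finset ℕ, a ∈ B → b ∈ B → (a ∩ b).Nonempty → a ∩ b ∉ B → a ∪ b ⊆ T →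
        (a ∪ b).card = (q.1 ∪ q.2).card → (a ∩ b).card ≤ (q.1 ∩ q.2).card := by
      intro a b ha hb h1 h2 h3 h4
      refine hqmax (a, b) ?_
      rw [hpooldef, Finset.mem_filter]
      exact ⟨(hGPmem (a, b)).mpr ⟨ha, hb, h1, h2, h3⟩, by rw [h4, hqcard]⟩
    have hic : q.2 ∩ q.1 = q.1 ∩ q.2 := Finset.inter_comm _ _
    have huc : q.2 ∪ q.1 = q.1 ∪ q.2 := Finset.union_comm _ _
    have EL := E_of_min_max (T := T) hq1 hq2 hqi hqiB hqT hmin hmaxI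
    have ER := E_of_min_max (T := T) hq2 hq1 (by rw [hic]; exact hqi) (by rw [hic]; exact hqiB)
      (by rw [huc]; exact hqT)
      (by intro a b ha hb h1 h2 h3; rw [huc]; exact hmin a b ha hb h1 h2 h3)
      (by intro a b ha hb h1 h2 h3 h4; rw [hic]
          exact hmaxI a b ha hb h1 h2 h3 (by rw [← huc]; exact h4))
    refine ⟨q.1, q.2, hq1, hq2, hqi, hqiB, EL, ER, Or.inl ?_⟩
    have hne : q.1 ∪ q.2 ≠ T := by
      intro h
      rw [h] at hqcard
      omega
    exact HasSubset.Subset.ssubset_of_ne hqT hne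
  · -- Case B: every good pair has full union T
    push_neg at hlt
    have hAll : ∀ a b : Finset ℕ, a ∈ B → b ∈ B → (a ∩ b).Nonempty → a ∩ b ∉ B → a ∪ b ⊆ T →
        a ∪ b = T := by
      intro a b ha hb h1 h2 h3
      have hmem : (a, b) ∈ GP := (hGPmem (a, b)).mpr ⟨ha, hb, h1, h2, h3⟩
      exact Finset.eq_of_subset_of_card_le h3 (le_trans hlt (hp₀min (a, b) hmem))
    set pool := GP.filter (fun p => 3 ≤ (Bmax (restrict B (p.1 ∩ p.2))).card) with hpooldef
    have hIpool : (I₁, I₂) ∈ pool := by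
      rw [hpooldef, Finset.mem_filter]
      exact ⟨hIGP, hmax3⟩
    obtain ⟨q, hqpool, hqmax⟩ := Finset.exists_max_image pool (fun p => (p.1 ∩ p.2).card)
      ⟨(I₁, I₂), hIpool⟩
    have hqGP : q ∈ GP := (Finset.mem_filter.mp hqpool).1
    have hq3 : 3 ≤ (Bmax (restrict B (q.1 ∩ q.2))).card := (Finset.mem_filter.mp hqpool).2
    obtain ⟨hq1, hq2, hqi, hqiB, hqT⟩ := (hGPmem q).mp hqGP
    have hmaxI : ∀ a b : Finset ℕ, a ∈ B → b ∈ B → (a ∩ b).Nonempty → a ∩ b ∉ B → a ∪ b ⊆ T →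
        3 ≤ (Bmax (restrict B (a ∩ b))).card → (a ∩ b).card ≤ (q.1 ∩ q.2).card := by
      intro a b ha hb h1 h2 h3 h4
      refine hqmax (a, b) ?_
      rw [hpooldef, Finset.mem_filter]
      exact ⟨(hGPmem (a, b)).mpr ⟨ha, hb, h1, h2, h3⟩, h4⟩
    have hic : q.2 ∩ q.1 = q.1 ∩ q.2 := Finset.inter_comm _ _
    have huc : q.2 ∪ q.1 = q.1 ∪ q.2 := Finset.union_comm _ _
    have EL := E_of_stuck (T := T) hB hq1 hq2 hqi hqiB hqT hAll hmaxI hq3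
    have ER := E_of_stuck (T := T) hB hq2 hq1 (by rw [hic]; exact hqi) (by rw [hic]; exact hqiB)
      (by rw [huc]; exact hqT) hAll
      (by intro a b ha hb h1 h2 h3 h4; rw [hic]; exact hmaxI a b ha hb h1 h2 h3 h4)
      (by rw [hic]; exact hq3)
    exact ⟨q.1, q.2, hq1, hq2, hqi, hqiB, EL, ER, Or.inr hq3⟩


/-- Lemma: if `|(B|_{I₁ ∩ I₂})_max| ≥ 3`, there are `J₁, J₂ ∈ B` with nonempty
intersection not in `B`, elements `j₁, j₂` and maximal nested sets `N, N'` such that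
both candidate sets are nested sets of `B`, and moreover either `J₁ ∪ J₂ ⊊ I₁ ∪ I₂`
or `|(B|_{J₁ ∩ J₂})_max| ≥ 3`. -/
theorem stmt_5 (S : Finset ℕ) (hS : S.Nonempty) (B : Finset (Finset ℕ))
    (hB : IsBuilding S B) (hconn : Bmax B = {S})
    (I₁ I₂ : Finset ℕ) (hI₁ : I₁ ∈ B) (hI₂ : I₂ ∈ B)
    (hint : (I₁ ∩ I₂).Nonempty) (h12 : ¬I₁ ⊆ I₂) (h21 : ¬I₂ ⊆ I₁)
    (hmax3 : 3 ≤ (Bmax (restrict B (I₁ ∩ I₂))).card) :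
    ∃ J₁ ∈ B, ∃ J₂ ∈ B, ∃ j₁ ∈ J₁ \ J₂, ∃ j₂ ∈ J₂ \ J₁,
      ∃ N N' : Finset (Finset ℕ),
        MaxNested (restrict B (J₁ ∩ J₂)) N ∧
        MaxNested (restrict B (((J₁ ∪ J₂) \ (J₁ ∩ J₂)) \ {j₁, j₂})) N' ∧
        (J₁ ∩ J₂).Nonempty ∧ J₁ ∩ J₂ ∉ B ∧
        IsNested B (insert J₁ (N ∪ Bmax (restrict B (J₁ ∩ J₂)) ∪ N' ∪
          Bmax (restrict B (((J₁ ∪ J₂) \ (J₁ ∩ J₂)) \ {j₁, j₂})))) ∧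
        IsNested B (insert J₂ (N ∪ Bmax (restrict B (J₁ ∩ J₂)) ∪ N' ∪
          Bmax (restrict B (((J₁ ∪ J₂) \ (J₁ ∩ J₂)) \ {j₁, j₂})))) ∧
        (J₁ ∪ J₂ ⊂ I₁ ∪ I₂ ∨ 3 ≤ (Bmax (restrict B (J₁ ∩ J₂))).card) := by
  classical
  obtain ⟨J₁, J₂, hJ₁, hJ₂, hJi, hJiB, EL, ER, hdisj⟩ := selection hB hI₁ hI₂ hint hmax3
  have hA : (J₁ \ J₂).Nonempty := by
    rw [Finset.sdiff_nonempty]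
    intro h
    apply hJiB
    rw [Finset.inter_eq_left.mpr h]
    exact hJ₁
  have hB₂ : (J₂ \ J₁).Nonempty := by
    rw [Finset.sdiff_nonempty]
    intro h
    apply hJiB
    rw [Finset.inter_eq_right.mpr h]
    exact hJ₂
  obtain ⟨j₁, hj₁⟩ := hA
  obtain ⟨j₂, hj₂⟩ := hB₂
  obtain ⟨N, hN⟩ := exists_maxNested (restrict B (J₁ ∩ J₂))
  obtain ⟨N', hN'⟩ := exists_maxNested (restrict B (((J₁ ∪ J₂) \ (J₁ ∩ J₂)) \ {j₁, j₂}))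
  have key1 := key_lemma hB hconn hJ₁ hJ₂ hJi hJiB EL ER hj₁ hj₂ hN.1 hN'.1
  have hic : J₂ ∩ J₁ = J₁ ∩ J₂ := Finset.inter_comm _ _
  have huc : J₂ ∪ J₁ = J₁ ∪ J₂ := Finset.union_comm _ _
  have hpc : ({j₂, j₁} : Finset ℕ) = {j₁, j₂} := Finset.pair_comm _ _
  have key2 := key_lemma hB hconn hJ₂ hJ₁ (by rw [hic]; exact hJi) (by rw [hic]; exact hJiB)
    ER EL hj₂ hj₁ (by rw [hic]; exact hN.1) (by rw [hic, huc, hpc]; exact hN'.1)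
  rw [hic, huc, hpc] at key2
  exact ⟨J₁, hJ₁, J₂, hJ₂, j₁, hj₁, j₂, hj₂, N, N', hN, hN', hJi, hJiB, key1, key2, hdisj⟩
end

section
/- Let B be a connected building set on S and let J_1, J_2 ∈ B with J_1 ∩ J_2 ≠ ∅, J_1 ⊄ J_2, J_2 ⊄ J_1 and J_1 ∪ J_2 ⊊ S. Let N″ be a nested set of B|_{J_1 ∪ J_2} such that {J_k} ∪ N″ is a maximal nested set of B|_{J_1 ∪ J_2} for each k = 1, 2. Then there exists a nested set M of B such that {J_k, J_1 ∪ J_2} ∪ N″ ∪ M is a maximal nested set of B for each k = 1, 2. -/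
lemma nested_subset {B N M : Finset (Finset ℕ)} (h : IsNested B N) (hMN : M ⊆ N) :
    IsNested B M :=
  ⟨hMN.trans h.1, fun I hI J hJ => h.2.1 I (hMN hI) J (hMN hJ),
   fun F hF => h.2.2 F (hF.trans hMN)⟩

lemma exists_max_nested {B N : Finset (Finset ℕ)} (h : IsNested B N) :
    ∃ Mf, N ⊆ Mf ∧ MaxNested B Mf := by
  classical
  have hsub : ∀ N', IsNested B N' → N' ⊆ B := fun N' h' x hx =>
    (Finset.mem_sdiff.1 (h'.1 hx)).1
  set T := B.powerset.filter (fun N' => IsNested B N' ∧ N ⊆ N') with hT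
  have hNT : N ∈ T := Finset.mem_filter.2 ⟨Finset.mem_powerset.2 (hsub N h), h, le_refl _⟩
  obtain ⟨Mf, hMfT, hmax⟩ := T.exists_max_image (fun x => x.card) ⟨N, hNT⟩
  have hMfT' := Finset.mem_filter.1 hMfT
  obtain ⟨hMfn, hNMf⟩ := hMfT'.2
  refine ⟨Mf, hNMf, hMfn, fun N' hN' hMfN' => ?_⟩
  have hN'T : N' ∈ T := Finset.mem_filter.2
    ⟨Finset.mem_powerset.2 (hsub N' hN'), hN', hNMf.trans hMfN'⟩
  exact Finset.eq_of_subset_of_card_le hMfN' (hmax N' hN'T)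

lemma sup_insert_filter (F : Finset (Finset ℕ)) (U : Finset ℕ)
    (hcov : ∀ x ∈ F, x ⊆ U ∨ x ∩ U = ∅) :
    (insert U (F.filter (fun x => x ∩ U = ∅))).sup id = F.sup id ∪ U := by
  classical
  apply Finset.Subset.antisymm
  · have : (insert U (F.filter (fun x => x ∩ U = ∅))).sup id ≤ F.sup id ∪ U := by
      refine Finset.sup_le ?_
      intro x hx
      rcases Finset.mem_insert.1 hx with rfl | hx
      · exact Finset.subset_union_right
      · exact (Finset.le_sup (f := id) (Finset.mem_of_mem_filter x hx)).trans
          Finset.subset_union_left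
    exact this
  · apply Finset.union_subset
    · have : F.sup id ≤ (insert U (F.filter (fun x => x ∩ U = ∅))).sup id := by
        refine Finset.sup_le ?_
        intro x hx
        rcases hcov x hx with h | h
        · exact le_trans h (Finset.le_sup (f := id) (Finset.mem_insert_self U _))
        · exact Finset.le_sup (f := id) (Finset.mem_insert_of_mem (Finset.mem_filter.2 ⟨hx, h⟩))
      exact this
    · exact Finset.le_sup (f := id) (Finset.mem_insert_self U _)

lemma insert_filter_disjoint (F : Finset (Finset ℕ)) (U : Finset ℕ)
    (hdisj : ∀ I ∈ F, ∀ J ∈ F, I ≠ J → I ∩ J = ∅) :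
    ∀ a ∈ insert U (F.filter (fun x => x ∩ U = ∅)),
      ∀ b ∈ insert U (F.filter (fun x => x ∩ U = ∅)), a ≠ b → a ∩ b = ∅ := by
  classical
  intro a ha b hb hab
  rcases Finset.mem_insert.1 ha with h | h
  · rcases Finset.mem_insert.1 hb with h' | h'
    · exact absurd (h.trans h'.symm) hab
    · rw [h, Finset.inter_comm]
      exact (Finset.mem_filter.1 h').2
  · rcases Finset.mem_insert.1 hb with h' | h'
    · rw [h']
      exact (Finset.mem_filter.1 h).2
    · exact hdisj a (Finset.mem_filter.1 h).1 b (Finset.mem_filter.1 h').1 hab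

/-- Lemma: a pair of maximal nested sets of `B|_{J₁ ∪ J₂}` differing only in `J₁` vs
`J₂` extends, after adding `J₁ ∪ J₂` and a common set `M`, to a pair of maximal nested
sets of `B`. -/
theorem stmt_6 (S : Finset ℕ) (hS : S.Nonempty) (B : Finset (Finset ℕ))
    (hB : IsBuilding S B) (hconn : Bmax B = {S})
    (J₁ J₂ : Finset ℕ) (hJ₁ : J₁ ∈ B) (hJ₂ : J₂ ∈ B)
    (hint : (J₁ ∩ J₂).Nonempty) (h12 : ¬J₁ ⊆ J₂) (h21 : ¬J₂ ⊆ J₁)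
    (hsub : J₁ ∪ J₂ ⊂ S)
    (N'' : Finset (Finset ℕ)) (hN'' : IsNested (restrict B (J₁ ∪ J₂)) N'')
    (h₁ : MaxNested (restrict B (J₁ ∪ J₂)) (insert J₁ N''))
    (h₂ : MaxNested (restrict B (J₁ ∪ J₂)) (insert J₂ N'')) :
    ∃ M : Finset (Finset ℕ), IsNested B M ∧
      MaxNested B (insert J₁ (insert (J₁ ∪ J₂) (N'' ∪ M))) ∧
      MaxNested B (insert J₂ (insert (J₁ ∪ J₂) (N'' ∪ M))) := by
  classical
  obtain ⟨hBsub, hBcup, -⟩ := hB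
  set U := J₁ ∪ J₂ with hUdef
  have hU : U ∈ B := hBcup J₁ hJ₁ J₂ hJ₂ hint
  have hJ₁U : J₁ ⊆ U := Finset.subset_union_left
  have hJ₂U : J₂ ⊆ U := Finset.subset_union_right
  have hUne : U ≠ S := hsub.ne
  have hneS : ∀ x : Finset ℕ, x ⊆ U → x ≠ S := by
    intro x hxU hxS
    subst hxS
    exact hsub.2 hxU
  have hJ₁ne : J₁ ≠ U := by
    intro h
    exact h21 (h ▸ hJ₂U)
  have hJ₂ne : J₂ ≠ U := by
    intro h
    exact h12 (h ▸ hJ₁U)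
  have hJ₁nonempty : J₁.Nonempty := (hBsub J₁ hJ₁).2
  have hJ₂nonempty : J₂.Nonempty := (hBsub J₂ hJ₂).2
  have hUnonempty : U.Nonempty := (hBsub U hU).2
  have hintne : J₁ ∩ J₂ ≠ ∅ := hint.ne_empty
  -- membership characterizations
  have hmem : ∀ x, x ∈ B \ Bmax B ↔ x ∈ B ∧ x ≠ S := by
    intro x
    rw [Finset.mem_sdiff, hconn, Finset.mem_singleton]
  have hUr : U ∈ restrict B U := Finset.mem_filter.2 ⟨hU, le_refl _⟩
  have hBmaxr : Bmax (restrict B U) = {U} := by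
    ext I
    rw [Bmax, Finset.mem_filter, Finset.mem_singleton]
    constructor
    · rintro ⟨hI, hImax⟩
      exact hImax U hUr ((Finset.mem_filter.1 hI).2)
    · rintro rfl
      exact ⟨hUr, fun J hJ hUJ => Finset.Subset.antisymm hUJ (Finset.mem_filter.1 hJ).2⟩
  have hmemr : ∀ x, x ∈ restrict B U \ Bmax (restrict B U) ↔ (x ∈ B ∧ x ⊆ U) ∧ x ≠ U := by
    intro x
    rw [Finset.mem_sdiff, hBmaxr, Finset.mem_singleton, restrict, Finset.mem_filter]
  have hN''mem : ∀ x ∈ N'', x ∈ B ∧ x ⊆ U ∧ x ≠ U := by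
    intro x hx
    obtain ⟨⟨h1, h2⟩, h3⟩ := (hmemr x).1 (hN''.1 hx)
    exact ⟨h1, h2, h3⟩
  have hJ₁notpair : ¬(J₁ ⊆ J₂ ∨ J₂ ⊆ J₁ ∨ J₁ ∩ J₂ = ∅) := by
    rintro (h | h | h)
    · exact h12 h
    · exact h21 h
    · exact hintne h
  have hJ₁N'' : J₁ ∉ N'' := by
    intro h
    exact hJ₁notpair (h₂.1.2.1 J₁ (Finset.mem_insert_of_mem h) J₂ (Finset.mem_insert_self _ _))
  -- nonemptiness + disjointness contradiction helper
  have hdisjne : ∀ x y : Finset ℕ, x.Nonempty → x ⊆ y → y ∩ x ≠ ∅ := by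
    intro x y hx hxy h
    obtain ⟨a, ha⟩ := hx
    have : a ∈ y ∩ x := Finset.mem_inter.2 ⟨hxy ha, ha⟩
    rw [h] at this
    exact absurd this (Finset.notMem_empty a)
  -- N₀
  set N₀ := insert J₁ (insert U N'') with hN₀def
  have hN₀elem : ∀ x ∈ N₀, x ∈ B ∧ x ⊆ U := by
    intro x hx
    rcases Finset.mem_insert.1 hx with rfl | hx
    · exact ⟨hJ₁, hJ₁U⟩
    rcases Finset.mem_insert.1 hx with rfl | hx
    · exact ⟨hU, le_refl _⟩
    · exact ⟨(hN''mem x hx).1, (hN''mem x hx).2.1⟩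
  have hN₀ : IsNested B N₀ := by
    refine ⟨?_, ?_, ?_⟩
    · intro x hx
      exact (hmem x).2 ⟨(hN₀elem x hx).1, hneS x (hN₀elem x hx).2⟩
    · intro x hx y hy
      by_cases hxU : x = U
      · rw [hxU]
        exact Or.inr (Or.inl (hN₀elem y hy).2)
      by_cases hyU : y = U
      · rw [hyU]
        exact Or.inl (hN₀elem x hx).2
      have hx' : x ∈ insert J₁ N'' := by
        rcases Finset.mem_insert.1 hx with h | h
        · rw [h]; exact Finset.mem_insert_self _ _
        rcases Finset.mem_insert.1 h with h' | h'
        · exact absurd h' hxU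
        · exact Finset.mem_insert_of_mem h'
      have hy' : y ∈ insert J₁ N'' := by
        rcases Finset.mem_insert.1 hy with h | h
        · rw [h]; exact Finset.mem_insert_self _ _
        rcases Finset.mem_insert.1 h with h' | h'
        · exact absurd h' hyU
        · exact Finset.mem_insert_of_mem h'
      exact h₁.1.2.1 x hx' y hy' 
    · intro F hF hcard hdisj hFB
      by_cases hUF : U ∈ F
      · obtain ⟨x, hxF, hxne⟩ := Finset.exists_mem_ne (s := F) (by omega) U
        have hxN₀ := hF hxF
        have hxne' : x.Nonempty := (hBsub x (hN₀elem x hxN₀).1).2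
        exact hdisjne x U hxne' (hN₀elem x hxN₀).2 (Finset.inter_comm U x ▸ hdisj x hxF U hUF hxne)
      · have hFsub : F ⊆ insert J₁ N'' := by
          intro x hx
          rcases Finset.mem_insert.1 (hF hx) with rfl | hx'
          · exact Finset.mem_insert_self _ _
          rcases Finset.mem_insert.1 hx' with rfl | hx''
          · exact absurd hx hUF
          · exact Finset.mem_insert_of_mem hx''
        have hFU : F.sup id ≤ U := Finset.sup_le fun x hx => (hN₀elem x (hF hx)).2
        exact h₁.1.2.2 F hFsub hcard hdisj (Finset.mem_filter.2 ⟨hFB, hFU⟩)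
  obtain ⟨Mf, hN₀Mf, hMfmax⟩ := exists_max_nested hN₀
  have hMf := hMfmax.1
  have hMfJ₁ : J₁ ∈ Mf := hN₀Mf (Finset.mem_insert_self _ _)
  have hMfU : U ∈ Mf := hN₀Mf (Finset.mem_insert_of_mem (Finset.mem_insert_self _ _))
  have hN''Mf : ∀ x ∈ N'', x ∈ Mf := fun x hx =>
    hN₀Mf (Finset.mem_insert_of_mem (Finset.mem_insert_of_mem hx))
  have hMfB : ∀ x ∈ Mf, x ∈ B := fun x hx => ((hmem x).1 (hMf.1 hx)).1
  have hinterU : ∀ x : Finset ℕ, x.Nonempty → x ⊆ U → x ∩ U ≠ ∅ := by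
    intro x hx hxU h
    rw [Finset.inter_comm] at h
    exact hdisjne x U hx hxU h
  set M := Mf \ N₀ with hMdef
  have hMmem : ∀ x ∈ M, x ∈ Mf ∧ x ≠ J₁ ∧ x ≠ U ∧ x ∉ N'' := by
    intro x hx
    obtain ⟨h1, h2⟩ := Finset.mem_sdiff.1 hx
    rw [hN₀def, Finset.mem_insert, Finset.mem_insert] at h2
    push_neg at h2
    exact ⟨h1, h2⟩
  have hMfeq : insert J₁ (insert U (N'' ∪ M)) = Mf := by
    apply Finset.Subset.antisymm
    · intro x hx
      rcases Finset.mem_insert.1 hx with h | h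
      · rw [h]; exact hMfJ₁
      rcases Finset.mem_insert.1 h with h' | h'
      · rw [h']; exact hMfU
      rcases Finset.mem_union.1 h' with h'' | h''
      · exact hN''Mf x h''
      · exact (hMmem x h'').1
    · intro x hx
      by_cases hxN₀ : x ∈ N₀
      · rcases Finset.mem_insert.1 hxN₀ with h | h
        · exact Finset.mem_insert.2 (Or.inl h)
        rcases Finset.mem_insert.1 h with h' | h'
        · exact Finset.mem_insert_of_mem (Finset.mem_insert.2 (Or.inl h'))
        · exact Finset.mem_insert_of_mem (Finset.mem_insert_of_mem (Finset.mem_union_left _ h'))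
      · exact Finset.mem_insert_of_mem (Finset.mem_insert_of_mem
          (Finset.mem_union_right _ (Finset.mem_sdiff.2 ⟨hx, hxN₀⟩)))
  have hMnested : IsNested B M := nested_subset hMf Finset.sdiff_subset
  have char : ∀ I ∈ Mf, I ⊆ U → I ≠ U → I ∈ insert J₁ N'' := by
    intro I hI hIU hIne
    set P := Mf.filter (fun x => x ⊆ U ∧ x ≠ U) with hPdef
    have hPsub : insert J₁ N'' ⊆ P := by
      intro x hx
      rcases Finset.mem_insert.1 hx with h | h
      · rw [h]; exact Finset.mem_filter.2 ⟨hMfJ₁, hJ₁U, hJ₁ne⟩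
      · exact Finset.mem_filter.2 ⟨hN''Mf x h, (hN''mem x h).2.1, (hN''mem x h).2.2⟩
    have hPn : IsNested (restrict B U) P := by
      refine ⟨?_, ?_, ?_⟩
      · intro x hx
        obtain ⟨h1, h2, h3⟩ := Finset.mem_filter.1 hx
        exact (hmemr x).2 ⟨⟨hMfB x h1, h2⟩, h3⟩
      · intro x hx y hy
        exact hMf.2.1 x (Finset.mem_of_mem_filter x hx) y (Finset.mem_of_mem_filter y hy)
      · intro F hF hcard hdisj hsup
        exact hMf.2.2 F (hF.trans (Finset.filter_subset _ _)) hcard hdisj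
          (Finset.mem_filter.1 hsup).1
    have hPeq := h₁.2 P hPn hPsub
    rw [hPeq]
    exact Finset.mem_filter.2 ⟨hI, hIU, hIne⟩
  have hMU : ∀ y ∈ M, U ⊆ y ∨ y ∩ U = ∅ := by
    intro y hy
    obtain ⟨hyMf, hyJ₁, hyU, hyN''⟩ := hMmem y hy
    rcases hMf.2.1 y hyMf U hMfU with h | h | h
    · rcases Finset.mem_insert.1 (char y hyMf h hyU) with h' | h'
      · exact absurd h' hyJ₁
      · exact absurd h' hyN''
    · exact Or.inl h
    · exact Or.inr h
  have hJ₂Mf : J₂ ∉ Mf := by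
    intro h
    exact hJ₁notpair (hMf.2.1 J₁ hMfJ₁ J₂ h)
  set N₂ := insert J₂ (insert U (N'' ∪ M)) with hN₂def
  have hN₂mem : ∀ x, x ∈ N₂ ↔ x = J₂ ∨ x = U ∨ x ∈ N'' ∨ x ∈ M := by
    intro x
    rw [hN₂def]
    simp only [Finset.mem_insert, Finset.mem_union]
  have hrestMf : ∀ x, x = U ∨ x ∈ N'' ∨ x ∈ M → x ∈ Mf := by
    rintro x (h | h | h)
    · rw [h]; exact hMfU
    · exact hN''Mf x h
    · exact (hMmem x h).1
  have hJ₂vs : ∀ y, y = U ∨ y ∈ N'' ∨ y ∈ M → J₂ ⊆ y ∨ y ⊆ J₂ ∨ J₂ ∩ y = ∅ := by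
    rintro y (h | h | h)
    · rw [h]; exact Or.inl hJ₂U
    · exact h₂.1.2.1 J₂ (Finset.mem_insert_self _ _) y (Finset.mem_insert_of_mem h)
    · rcases hMU y h with h' | h'
      · exact Or.inl (hJ₂U.trans h')
      · refine Or.inr (Or.inr ?_)
        apply Finset.subset_empty.1
        intro a ha
        obtain ⟨ha1, ha2⟩ := Finset.mem_inter.1 ha
        have : a ∈ y ∩ U := Finset.mem_inter.2 ⟨ha2, hJ₂U ha1⟩
        rwa [h'] at this
  have hMfsubN₂ : ∀ x ∈ Mf, x ≠ J₁ → x ∈ N₂ := by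
    intro x hx hxJ₁
    by_cases h : x ∈ N₀
    · rcases Finset.mem_insert.1 h with h' | h'
      · exact absurd h' hxJ₁
      rcases Finset.mem_insert.1 h' with h'' | h''
      · exact (hN₂mem x).2 (Or.inr (Or.inl h''))
      · exact (hN₂mem x).2 (Or.inr (Or.inr (Or.inl h'')))
    · exact (hN₂mem x).2 (Or.inr (Or.inr (Or.inr (Finset.mem_sdiff.2 ⟨hx, h⟩))))
  have hN₂nested : IsNested B N₂ := by
    refine ⟨?_, ?_, ?_⟩
    · intro x hx
      rcases (hN₂mem x).1 hx with h | h
      · rw [h]; exact (hmem J₂).2 ⟨hJ₂, hneS J₂ hJ₂U⟩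
      · exact hMf.1 (hrestMf x h)
    · intro x hx y hy
      rcases (hN₂mem x).1 hx with hxJ | hx'
      · rcases (hN₂mem y).1 hy with hyJ | hy'
        · rw [hxJ, hyJ]; exact Or.inl (le_refl _)
        · rw [hxJ]; exact hJ₂vs y hy'
      · rcases (hN₂mem y).1 hy with hyJ | hy'
        · rw [hyJ]
          rcases hJ₂vs x hx' with h | h | h
          · exact Or.inr (Or.inl h)
          · exact Or.inl h
          · exact Or.inr (Or.inr (by rw [Finset.inter_comm]; exact h))
        · exact hMf.2.1 x (hrestMf x hx') y (hrestMf y hy')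
    · intro F hF hcard hdisj hFB
      by_cases hJ₂F : J₂ ∈ F
      · have hUF : U ∉ F := by
          intro hUF
          exact hdisjne J₂ U hJ₂nonempty hJ₂U (hdisj U hUF J₂ hJ₂F (Ne.symm hJ₂ne))
        have hcov : ∀ x ∈ F, x ⊆ U ∨ x ∩ U = ∅ := by
          intro x hx
          rcases (hN₂mem x).1 (hF hx) with h | h | h | h
          · rw [h]; exact Or.inl hJ₂U
          · rw [h] at hx; exact absurd hx hUF
          · exact Or.inl (hN''mem x h).2.1
          · rcases hMU x h with h' | h'
            · exfalso
              have hxJ₂ : x ≠ J₂ := by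
                intro he
                rw [he] at h
                exact hJ₂Mf (hMmem J₂ h).1
              exact hdisjne J₂ x hJ₂nonempty (hJ₂U.trans h') (hdisj x hx J₂ hJ₂F hxJ₂)
            · exact Or.inr h'
        by_cases hG : (F.filter (fun x => x ∩ U = ∅)).Nonempty
        · obtain ⟨x₀, hx₀⟩ := hG
          have hUG : U ∉ F.filter (fun x => x ∩ U = ∅) :=
            fun h => hinterU U hUnonempty (le_refl _) (Finset.mem_filter.1 h).2
          have hGMf : insert U (F.filter (fun x => x ∩ U = ∅)) ⊆ Mf := by
            intro x hx
            rcases Finset.mem_insert.1 hx with h | h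
            · rw [h]; exact hMfU
            · obtain ⟨hxF, hxU⟩ := Finset.mem_filter.1 h
              rcases (hN₂mem x).1 (hF hxF) with h' | h' | h' | h'
              · exfalso; rw [h'] at hxU; exact hinterU J₂ hJ₂nonempty hJ₂U hxU
              · rw [h'] at hxF; exact absurd hxF hUF
              · exfalso
                exact hinterU x (hBsub x (hN''mem x h').1).2 (hN''mem x h').2.1 hxU
              · exact (hMmem x h').1
          have hGcard : 2 ≤ (insert U (F.filter (fun x => x ∩ U = ∅))).card := by
            rw [Finset.card_insert_of_notMem hUG]
            have : 0 < (F.filter (fun x => x ∩ U = ∅)).card := Finset.card_pos.2 ⟨x₀, hx₀⟩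
            omega
          have hsupB : F.sup id ∪ U ∈ B := hBcup _ hFB U hU
            (hJ₂nonempty.mono (Finset.subset_inter (Finset.le_sup (f := id) hJ₂F) hJ₂U))
          have hno := hMf.2.2 _ hGMf hGcard (insert_filter_disjoint F U hdisj)
          rw [sup_insert_filter F U hcov] at hno
          exact hno hsupB
        · have hFsub2 : F ⊆ insert J₂ N'' := by
            intro x hx
            rcases (hN₂mem x).1 (hF hx) with h | h | h | h
            · rw [h]; exact Finset.mem_insert_self _ _
            · rw [h] at hx; exact absurd hx hUF
            · exact Finset.mem_insert_of_mem h
            · exfalso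
              rcases hMU x h with h' | h'
              · rcases hcov x hx with h'' | h''
                · exact (hMmem x h).2.2.1 (Finset.Subset.antisymm h'' h')
                · exact hG ⟨x, Finset.mem_filter.2 ⟨hx, h''⟩⟩
              · exact hG ⟨x, Finset.mem_filter.2 ⟨hx, h'⟩⟩
          have hFU : F.sup id ≤ U := Finset.sup_le fun x hx => by
            rcases hcov x hx with h | h
            · exact h
            · exact absurd ⟨x, Finset.mem_filter.2 ⟨hx, h⟩⟩ hG
          exact h₂.1.2.2 F hFsub2 hcard hdisj (Finset.mem_filter.2 ⟨hFB, hFU⟩)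
      · have hFMf : F ⊆ Mf := by
          intro x hx
          rcases (hN₂mem x).1 (hF hx) with h | h
          · rw [h] at hx; exact absurd hx hJ₂F
          · exact hrestMf x h
        exact hMf.2.2 F hFMf hcard hdisj hFB
  have hN₂max : ∀ N', IsNested B N' → N₂ ⊆ N' → N₂ = N' := by
    intro N' hN' hsubN'
    refine Finset.Subset.antisymm hsubN' ?_
    intro I hI
    by_contra hIN₂
    have hJ₂N' : J₂ ∈ N' := hsubN' (Finset.mem_insert_self _ _)
    have hUN' : U ∈ N' := hsubN' (Finset.mem_insert_of_mem (Finset.mem_insert_self _ _))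
    have hMfsubN' : ∀ x ∈ Mf, x ≠ J₁ → x ∈ N' := fun x hx h => hsubN' (hMfsubN₂ x hx h)
    have hJ₁N' : J₁ ∉ N' := by
      intro h
      exact hJ₁notpair (hN'.2.1 J₁ h J₂ hJ₂N')
    have hIJ₁ : I ≠ J₁ := by
      intro h
      rw [h] at hI
      exact hJ₁N' hI
    rcases hN'.2.1 I hI U hUN' with hIU | hrest
    · have hIneU : I ≠ U := fun h => hIN₂ ((hN₂mem I).2 (Or.inr (Or.inl h)))
      set Q := insert I (insert J₂ N'') with hQdef
      have hQN' : Q ⊆ N' := by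
        intro x hx
        rcases Finset.mem_insert.1 hx with h | h
        · rw [h]; exact hI
        rcases Finset.mem_insert.1 h with h' | h'
        · rw [h']; exact hJ₂N'
        · exact hsubN' ((hN₂mem x).2 (Or.inr (Or.inr (Or.inl h'))))
      have hQn : IsNested (restrict B U) Q := by
        refine ⟨?_, ?_, ?_⟩
        · intro x hx
          have hxB : x ∈ B := ((hmem x).1 (hN'.1 (hQN' hx))).1
          refine (hmemr x).2 ⟨⟨hxB, ?_⟩, ?_⟩
          · rcases Finset.mem_insert.1 hx with h | h
            · rw [h]; exact hIU
            rcases Finset.mem_insert.1 h with h' | h'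
            · rw [h']; exact hJ₂U
            · exact (hN''mem x h').2.1
          · rcases Finset.mem_insert.1 hx with h | h
            · rw [h]; exact hIneU
            rcases Finset.mem_insert.1 h with h' | h'
            · rw [h']; exact hJ₂ne
            · exact (hN''mem x h').2.2
        · intro x hx y hy
          exact hN'.2.1 x (hQN' hx) y (hQN' hy)
        · intro F hF hcard hdisj hsup
          exact hN'.2.2 F (hF.trans hQN') hcard hdisj (Finset.mem_filter.1 hsup).1
      have hQeq := h₂.2 Q hQn (Finset.subset_insert _ _)
      have hIQ : I ∈ insert J₂ N'' := by rw [hQeq]; exact Finset.mem_insert_self _ _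
      rcases Finset.mem_insert.1 hIQ with h | h
      · exact hIN₂ ((hN₂mem I).2 (Or.inl h))
      · exact hIN₂ ((hN₂mem I).2 (Or.inr (Or.inr (Or.inl h))))
    · have hIMf : I ∉ Mf := fun h => hIN₂ (hMfsubN₂ I h hIJ₁)
      have hIvs : ∀ y ∈ Mf, I ⊆ y ∨ y ⊆ I ∨ I ∩ y = ∅ := by
        intro y hy
        by_cases hyJ₁ : y = J₁
        · rcases hrest with h | h
          · rw [hyJ₁]; exact Or.inr (Or.inl (hJ₁U.trans h))
          · refine Or.inr (Or.inr ?_)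
            rw [hyJ₁]
            apply Finset.subset_empty.1
            intro a ha
            obtain ⟨ha1, ha2⟩ := Finset.mem_inter.1 ha
            have : a ∈ I ∩ U := Finset.mem_inter.2 ⟨ha1, hJ₁U ha2⟩
            rwa [h] at this
        · exact hN'.2.1 I hI y (hMfsubN' y hy hyJ₁)
      have hRn : IsNested B (insert I Mf) := by
        refine ⟨?_, ?_, ?_⟩
        · intro x hx
          rcases Finset.mem_insert.1 hx with h | h
          · rw [h]; exact hN'.1 hI
          · exact hMf.1 h
        · intro x hx y hy
          rcases Finset.mem_insert.1 hx with h | h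
          · rcases Finset.mem_insert.1 hy with h' | h'
            · rw [h, h']; exact Or.inl (le_refl _)
            · rw [h]; exact hIvs y h'
          · rcases Finset.mem_insert.1 hy with h' | h'
            · rw [h']
              rcases hIvs x h with h'' | h'' | h''
              · exact Or.inr (Or.inl h'')
              · exact Or.inl h''
              · exact Or.inr (Or.inr (by rw [Finset.inter_comm]; exact h''))
            · exact hMf.2.1 x h y h'
        · intro F hF hcard hdisj hFB
          by_cases hIF : I ∈ F
          · by_cases hJ₁F : J₁ ∈ F
            · have hIJ₁disj : I ∩ J₁ = ∅ := hdisj I hIF J₁ hJ₁F hIJ₁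
              rcases hrest with hUI | hd
              · exact hdisjne J₁ I hJ₁nonempty (hJ₁U.trans hUI) hIJ₁disj
              · have hcov : ∀ x ∈ F, x ⊆ U ∨ x ∩ U = ∅ := by
                  intro x hx
                  rcases Finset.mem_insert.1 (hF hx) with h | h
                  · rw [h]; exact Or.inr hd
                  · rcases hMf.2.1 x h U hMfU with h' | h' | h'
                    · exact Or.inl h'
                    · exfalso
                      have hxJ₁ : x ≠ J₁ := by
                        intro he
                        rw [he] at h'
                        exact h21 (hJ₂U.trans h')
                      exact hdisjne J₁ x hJ₁nonempty (hJ₁U.trans h')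
                        (hdisj x hx J₁ hJ₁F hxJ₁)
                    · exact Or.inr h'
                have hIG : I ∈ F.filter (fun x => x ∩ U = ∅) := Finset.mem_filter.2 ⟨hIF, hd⟩
                have hUG : U ∉ F.filter (fun x => x ∩ U = ∅) :=
                  fun h => hinterU U hUnonempty (le_refl _) (Finset.mem_filter.1 h).2
                have hGsub : insert U (F.filter (fun x => x ∩ U = ∅)) ⊆ N' := by
                  intro x hx
                  rcases Finset.mem_insert.1 hx with h | h
                  · rw [h]; exact hUN'
                  · obtain ⟨hxF, hxU⟩ := Finset.mem_filter.1 h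
                    rcases Finset.mem_insert.1 (hF hxF) with h' | h'
                    · rw [h']; exact hI
                    · have hxJ₁ : x ≠ J₁ := by
                        intro he
                        rw [he] at hxU
                        exact hinterU J₁ hJ₁nonempty hJ₁U hxU
                      exact hMfsubN' x h' hxJ₁
                have hGcard : 2 ≤ (insert U (F.filter (fun x => x ∩ U = ∅))).card := by
                  rw [Finset.card_insert_of_notMem hUG]
                  have : 0 < (F.filter (fun x => x ∩ U = ∅)).card :=
                    Finset.card_pos.2 ⟨I, hIG⟩
                  omega
                have hsupB : F.sup id ∪ U ∈ B := hBcup _ hFB U hU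
                  (hJ₁nonempty.mono (Finset.subset_inter (Finset.le_sup (f := id) hJ₁F) hJ₁U))
                have hno := hN'.2.2 _ hGsub hGcard (insert_filter_disjoint F U hdisj)
                rw [sup_insert_filter F U hcov] at hno
                exact hno hsupB
            · have hFN' : F ⊆ N' := by
                intro x hx
                rcases Finset.mem_insert.1 (hF hx) with h | h
                · rw [h]; exact hI
                · have hxJ₁ : x ≠ J₁ := by
                    intro he
                    rw [he] at hx
                    exact hJ₁F hx
                  exact hMfsubN' x h hxJ₁
              exact hN'.2.2 F hFN' hcard hdisj hFB
          · have hFMf : F ⊆ Mf := by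
              intro x hx
              rcases Finset.mem_insert.1 (hF hx) with h | h
              · rw [h] at hx; exact absurd hx hIF
              · exact h
            exact hMf.2.2 F hFMf hcard hdisj hFB
      have hReq := hMfmax.2 (insert I Mf) hRn (Finset.subset_insert _ _)
      apply hIMf
      rw [hReq]
      exact Finset.mem_insert_self _ _
  refine ⟨M, hMnested, ?_, ⟨hN₂nested, hN₂max⟩⟩
  rw [hMfeq]
  exact hMfmax
end

section
/- Let n ≥ 3, let S = {1, …, n+1}, and let P ⊂ ℝ^n be the convex hull of the points e_I = Σ_{i ∈ I} e_i for all nonempty proper subsets I of S, where e_1, …, e_n is the standard basis of ℝ^n and e_{n+1} = −e_1 − ⋯ − e_n. Then there is no finite directed graph G (with no loops and no multiple arrows) on the node set {1, …, n+1} and no linear isomorphism f : ℝ^n → H, where H = {(x_1, …, x_{n+1}) ∈ ℝ^{n+1} : x_1 + ⋯ + x_{n+1} = 0}, such that f(ℤ^n) = H ∩ ℤ^{n+1} and f(P) = P_G, where P_G is the convex hull in ℝ^{n+1} of the set {e_i − e_j : (i, j) an arrow of G}. -/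
/-- For `S = {1, …, n+1}`: `eVec n i` is the `i`-th standard basis vector of `ℝ^n`
for `1 ≤ i ≤ n`, and `eVec n (n+1) = -e_1 - ⋯ - e_n`. -/
def eVec (n : ℕ) (i : ℕ) : Fin n → ℝ :=
  fun j => if i = (j : ℕ) + 1 then 1 else if i = n + 1 then -1 else 0

/-- `eSet n I = ∑ i ∈ I, e_i`. -/
def eSet (n : ℕ) (I : Finset ℕ) : Fin n → ℝ := ∑ i ∈ I, eVec n i

/-!
A lattice isomorphism carrying `P` onto `P_G` would send the `2^(n+1) - 2` vertices `e_I` of `P`,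
which are distinct lattice points, to distinct lattice points of `P_G`. But `P_G` lies in the
ℓ¹-ball of radius 2, whose lattice points on `H` are `0` and the roots `e_i - e_j` (`i ≠ j`), only
`n(n+1) + 1` of them, and `n(n+1) + 1 < 2^(n+1) - 2` once `n ≥ 3`.
-/

open Finset

section RootPolytope

variable {ι : Type*} [Fintype ι]

lemma convex_setOf_sum_abs_le (r : ℝ) : Convex ℝ {x : ι → ℝ | ∑ l, |x l| ≤ r} := by
  intro x hx y hy a b ha hb hab
  calc ∑ l, |a * x l + b * y l| ≤ ∑ l, (a * |x l| + b * |y l|) :=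
        sum_le_sum fun l _ => (abs_add_le _ _).trans_eq <| by
          rw [abs_mul, abs_mul, abs_of_nonneg ha, abs_of_nonneg hb]
    _ = a * ∑ l, |x l| + b * ∑ l, |y l| := by rw [sum_add_distrib, mul_sum, mul_sum]
    _ ≤ a * r + b * r := by gcongr <;> assumption
    _ = r := by rw [← add_mul, hab, one_mul]

lemma sum_abs_single_sub_single_le_two [DecidableEq ι] (i j : ι) :
    ∑ l, |(Pi.single i 1 - Pi.single j 1 : ι → ℝ) l| ≤ 2 := by
  calc ∑ l, |(Pi.single i 1 - Pi.single j 1 : ι → ℝ) l|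
      ≤ ∑ l, ((Pi.single i 1 : ι → ℝ) l + (Pi.single j 1 : ι → ℝ) l) := by
        refine sum_le_sum fun l _ => (abs_sub _ _).trans_eq ?_
        simp only [Pi.single_apply]
        split_ifs <;> norm_num
    _ = 2 := by rw [sum_add_distrib, Fintype.sum_pi_single', Fintype.sum_pi_single']; norm_num

lemma sum_abs_le_two_of_mem_convexHull [DecidableEq ι] {A : Finset (ι × ι)} {x : ι → ℝ}
    (hx : x ∈ convexHull ℝ {v : ι → ℝ | ∃ a ∈ A, v = Pi.single a.1 1 - Pi.single a.2 1}) :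
    ∑ l, |x l| ≤ 2 := by
  refine convexHull_min ?_ (convex_setOf_sum_abs_le 2) hx
  rintro _ ⟨a, -, rfl⟩
  exact sum_abs_single_sub_single_le_two a.1 a.2

lemma eq_single_sub_single_of_sum_abs_le_two [DecidableEq ι] {x : ι → ℝ} (h : ∑ l, |x l| ≤ 2)
    {i j : ι} (hi : 1 ≤ x i) (hj : x j ≤ -1) : x = Pi.single i 1 - Pi.single j 1 := by
  have hij : i ≠ j := by rintro rfl; linarith
  set R := (univ.erase i).erase j
  have hsplit : ∑ l, |x l| = |x i| + (|x j| + ∑ l ∈ R, |x l|) := by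
    rw [add_sum_erase _ (fun l => |x l|) (mem_erase.2 ⟨hij.symm, mem_univ j⟩),
      add_sum_erase _ (fun l => |x l|) (mem_univ i)]
  have hR : 0 ≤ ∑ l ∈ R, |x l| := sum_nonneg fun l _ => abs_nonneg _
  rw [hsplit, abs_of_pos (by linarith), abs_of_neg (by linarith)] at h
  have hR0 : ∀ l ∈ R, |x l| = 0 :=
    (sum_eq_zero_iff_of_nonneg fun l _ => abs_nonneg _).1 (by linarith)
  funext l
  rcases eq_or_ne l i with rfl | hli
  · simp [hij]; linarith
  rcases eq_or_ne l j with rfl | hlj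
  · simp [hli]; linarith
  simpa [hli, hlj] using hR0 l (by simp [R, hli, hlj])

lemma exists_one_le_of_sum_eq_zero {x : ι → ℝ} (hint : ∀ l, ∃ m : ℤ, x l = m)
    (h0 : ∑ l, x l = 0) (hx : x ≠ 0) : ∃ i, 1 ≤ x i := by
  by_contra! hlt
  have hnonpos : ∀ l ∈ univ, x l ≤ 0 := fun l _ => by
    obtain ⟨m, hm⟩ := hint l
    have := hlt l
    rw [hm] at this ⊢
    exact_mod_cast Int.lt_add_one_iff.1 (by exact_mod_cast this)
  exact hx <| funext fun l => (sum_eq_zero_iff_of_nonpos hnonpos).1 h0 l (mem_univ l)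

variable (ι) in
noncomputable def rootsWithZero [DecidableEq ι] : Finset (ι → ℝ) :=
  insert 0 (univ.offDiag.image fun p : ι × ι => Pi.single p.1 1 - Pi.single p.2 1)

lemma card_rootsWithZero_le [DecidableEq ι] :
    (rootsWithZero ι).card ≤ Fintype.card ι * (Fintype.card ι - 1) + 1 := by
  rw [rootsWithZero, Nat.mul_sub_one, ← card_univ, ← offDiag_card]
  exact (card_insert_le _ _).trans (Nat.succ_le_succ card_image_le)

lemma mem_rootsWithZero [DecidableEq ι] {x : ι → ℝ} (hint : ∀ l, ∃ m : ℤ, x l = m)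
    (h0 : ∑ l, x l = 0) (h2 : ∑ l, |x l| ≤ 2) : x ∈ rootsWithZero ι := by
  rcases eq_or_ne x 0 with rfl | hx
  · exact mem_insert_self _ _
  obtain ⟨i, hi⟩ := exists_one_le_of_sum_eq_zero hint h0 hx
  obtain ⟨j, hj⟩ := exists_one_le_of_sum_eq_zero (x := -x)
    (fun l => (hint l).elim fun m hm => ⟨-m, by simp [hm]⟩) (by simp [h0]) (neg_ne_zero.2 hx)
  have hj : x j ≤ -1 := by simp only [Pi.neg_apply] at hj; linarith
  refine mem_insert_of_mem (mem_image.2 ⟨(i, j), ?_, ?_⟩)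
  · simpa using fun h : i = j => by rw [h] at hi; linarith
  · exact (eq_single_sub_single_of_sum_abs_le_two h2 hi hj).symm

end RootPolytope

lemma eVec_apply (n i : ℕ) (j : Fin n) :
    eVec n i j = (if i = (j : ℕ) + 1 then 1 else 0) - if i = n + 1 then 1 else 0 := by
  unfold eVec
  have := j.isLt
  split_ifs <;> first | omega | norm_num

lemma eSet_apply (n : ℕ) (I : Finset ℕ) (j : Fin n) :
    eSet n I j = (if (j : ℕ) + 1 ∈ I then 1 else 0) - if n + 1 ∈ I then 1 else 0 := by
  simp only [eSet, Finset.sum_apply, eVec_apply, sum_sub_distrib, sum_ite_eq']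

lemma exists_int_eq_eSet_apply (n : ℕ) (I : Finset ℕ) (j : Fin n) : ∃ m : ℤ, eSet n I j = m :=
  ⟨(if (j : ℕ) + 1 ∈ I then 1 else 0) - if n + 1 ∈ I then 1 else 0, by
    rw [eSet_apply]; push_cast; rfl⟩

lemma last_mem_of_eSet_eq {n : ℕ} {I I' : Finset ℕ} (h : eSet n I = eSet n I')
    (hI' : I'.Nonempty) (hsub : I' ⊆ Icc 1 (n + 1)) (htop : n + 1 ∈ I) : n + 1 ∈ I' := by
  by_contra htop'
  obtain ⟨a, ha⟩ := hI'
  have haS := mem_Icc.1 (hsub ha)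
  have ha_ne : a ≠ n + 1 := ne_of_mem_of_not_mem ha htop'
  have hc := congrFun h ⟨a - 1, by omega⟩
  simp only [eSet_apply, Nat.sub_add_cancel haS.1, htop, htop', ha, if_true, if_false] at hc
  split_ifs at hc <;> norm_num at hc

lemma eSet_injOn (n : ℕ) : Set.InjOn (eSet n) {I | I.Nonempty ∧ I ⊂ Icc 1 (n + 1)} := by
  rintro I ⟨hI, hIS⟩ I' ⟨hI', hIS'⟩ h
  have htop : n + 1 ∈ I ↔ n + 1 ∈ I' :=
    ⟨last_mem_of_eSet_eq h hI' hIS'.subset, last_mem_of_eSet_eq h.symm hI hIS.subset⟩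
  ext a
  by_cases ha : 1 ≤ a ∧ a ≤ n
  · have hc := congrFun h ⟨a - 1, by omega⟩
    simp only [eSet_apply, Nat.sub_add_cancel ha.1, htop, sub_left_inj] at hc
    split_ifs at hc <;> simp_all
  rcases eq_or_ne a (n + 1) with rfl | hne
  · exact htop
  have haS : a ∉ Icc 1 (n + 1) := by rw [mem_Icc]; omega
  exact iff_of_false (fun h => haS (hIS.subset h)) (fun h => haS (hIS'.subset h))

lemma mem_erase_empty_ssubsets {α : Type*} [DecidableEq α] {s t : Finset α} :
    t ∈ s.ssubsets.erase ∅ ↔ t.Nonempty ∧ t ⊂ s := by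
  rw [mem_erase, mem_ssubsets, nonempty_iff_ne_empty]

lemma card_erase_empty_ssubsets {α : Type*} [DecidableEq α] {s : Finset α} (hs : s.Nonempty) :
    (s.ssubsets.erase ∅).card = 2 ^ s.card - 2 := by
  rw [card_erase_of_mem (empty_mem_ssubsets hs), ssubsets, card_erase_of_mem (mem_powerset_self _),
    card_powerset, Nat.sub_sub]

lemma succ_mul_add_three_lt_two_pow {n : ℕ} (hn : 3 ≤ n) : (n + 1) * n + 3 < 2 ^ (n + 1) := by
  induction n, hn using Nat.le_induction with
  | base => norm_num
  | succ n _ ih => rw [pow_succ 2 (n + 1)]; nlinarith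

/-- For `n ≥ 3`, the reflexive polytope of the building set `2^S \ {∅}` (the convex
hull of the `e_I` for nonempty proper `I ⊆ S`) is not lattice-equivalent to the
polytope `P_G` of any finite directed graph `G` (a loopless arrow set on `n+1` nodes):
there is no injective linear map `f : ℝ^n → ℝ^{n+1}` with range the hyperplane
`H = {∑ xᵢ = 0}`, matching lattice points, and sending the polytope to `P_G`. -/
theorem stmt_9 (n : ℕ) (hn : 3 ≤ n) :
    ¬∃ (A : Finset (Fin (n + 1) × Fin (n + 1)))
      (f : (Fin n → ℝ) →ₗ[ℝ] (Fin (n + 1) → ℝ)),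
      (∀ a ∈ A, a.1 ≠ a.2) ∧
      Function.Injective f ∧
      Set.range f = {x : Fin (n + 1) → ℝ | ∑ i, x i = 0} ∧
      f '' {x : Fin n → ℝ | ∀ i, ∃ m : ℤ, x i = (m : ℝ)} =
        {x : Fin (n + 1) → ℝ | ∑ i, x i = 0} ∩
          {x : Fin (n + 1) → ℝ | ∀ i, ∃ m : ℤ, x i = (m : ℝ)} ∧
      f '' (convexHull ℝ
          {v : Fin n → ℝ | ∃ I : Finset ℕ, I.Nonempty ∧ I ⊂ Finset.Icc 1 (n + 1) ∧
            v = eSet n I}) =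
        convexHull ℝ {v : Fin (n + 1) → ℝ |
          ∃ a ∈ A, v = Pi.single a.1 1 - Pi.single a.2 1} := by
  rintro ⟨A, f, -, hinj, -, hlat, hP⟩
  have hmaps : ∀ I ∈ (Icc 1 (n + 1)).ssubsets.erase ∅,
      f (eSet n I) ∈ rootsWithZero (Fin (n + 1)) := by
    intro I hI
    obtain ⟨hne, hss⟩ := mem_erase_empty_ssubsets.1 hI
    have hPG := Set.mem_image_of_mem f (subset_convexHull ℝ {v | ∃ I : Finset ℕ, I.Nonempty ∧
      I ⊂ Icc 1 (n + 1) ∧ v = eSet n I} ⟨I, hne, hss, rfl⟩)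
    rw [hP] at hPG
    have hZ := Set.mem_image_of_mem f
      (show eSet n I ∈ {x : Fin n → ℝ | ∀ i, ∃ m : ℤ, x i = m} from exists_int_eq_eSet_apply n I)
    rw [hlat] at hZ
    obtain ⟨h0, hint⟩ := hZ
    exact mem_rootsWithZero hint h0 (sum_abs_le_two_of_mem_convexHull hPG)
  have hcard := card_le_card_of_injOn _ hmaps fun I hI I' hI' h =>
    eSet_injOn n (mem_erase_empty_ssubsets.1 hI) (mem_erase_empty_ssubsets.1 hI') (hinj h)
  rw [card_erase_empty_ssubsets (nonempty_Icc.2 (by omega)), Nat.card_Icc, Nat.add_sub_cancel]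
    at hcard
  have hroots := card_rootsWithZero_le (ι := Fin (n + 1))
  rw [Fintype.card_fin, Nat.add_sub_cancel] at hroots
  have := succ_mul_add_three_lt_two_pow hn
  omega
end

section
/- Let G be a finite directed graph with node set V(G) = {1, …, n+1} and arrow set A(G) ⊆ V(G) × V(G), with no loops (i ≠ j for every arrow (i, j)). If the origin 0 lies in the convex hull of {e_i − e_j : (i, j) ∈ A(G)} in ℝ^{n+1}, then G contains a directed cycle, i.e., there exist distinct nodes i_1, …, i_r (r ≥ 2) with (i_1, i_2), (i_2, i_3), …, (i_{r−1}, i_r), (i_r, i_1) ∈ A(G). -/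
/-- If the origin lies in the convex hull of the arrow vectors `e_i - e_j` of a
loopless finite directed graph on `{1, …, n+1}`, then the graph contains a directed
cycle. -/
theorem stmt_10 (n : ℕ) (A : Finset (Fin (n + 1) × Fin (n + 1)))
    (hloop : ∀ a ∈ A, a.1 ≠ a.2)
    (h0 : (0 : Fin (n + 1) → ℝ) ∈ convexHull ℝ
      {v : Fin (n + 1) → ℝ | ∃ a ∈ A, v = Pi.single a.1 1 - Pi.single a.2 1}) :
    ∃ (m : ℕ) (c : Fin (m + 2) → Fin (n + 1)), Function.Injective c ∧
      ∀ i : Fin (m + 2), (c i, c (i + 1)) ∈ A := by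
  classical
  rw [convexHull_eq] at h0
  obtain ⟨ι, t, w, z, hw0, hw1, hz, hcm⟩ := h0
  have hz' : ∀ i : ι, ∃ a : Fin (n + 1) × Fin (n + 1),
      i ∈ t → a ∈ A ∧ z i = Pi.single a.1 1 - Pi.single a.2 1 := by
    intro i
    by_cases h : i ∈ t
    · obtain ⟨a, haA, hza⟩ := hz i h
      exact ⟨a, fun _ => ⟨haA, hza⟩⟩
    · exact ⟨(0, 0), fun h' => absurd h' h⟩
  choose a ha using hz'
  have hsum : ∑ i ∈ t, w i • z i = 0 := by
    rw [Finset.centerMass, hw1] at hcm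
    simpa using hcm
  have hflow : ∀ v : Fin (n + 1),
      ∑ i ∈ t, (if v = (a i).1 then w i else 0)
        = ∑ i ∈ t, (if v = (a i).2 then w i else 0) := by
    intro v
    have h1 := congrFun hsum v
    rw [Finset.sum_apply] at h1
    have h2 : ∀ i ∈ t, (w i • z i) v
        = (if v = (a i).1 then w i else 0) - (if v = (a i).2 then w i else 0) := by
      intro i hi
      have hza := (ha i hi).2
      simp [hza, Pi.single_apply, mul_sub]
    rw [Finset.sum_congr rfl h2, Finset.sum_sub_distrib] at h1
    exact sub_eq_zero.mp (by simpa using h1)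
  have key : ∀ v : Fin (n + 1), (∃ i ∈ t, 0 < w i ∧ (a i).2 = v) →
      ∃ i ∈ t, 0 < w i ∧ (a i).1 = v := by
    rintro v ⟨i0, hi0, hwi0, hqi0⟩
    by_contra hno
    push_neg at hno
    have hL : ∑ i ∈ t, (if v = (a i).1 then w i else 0) = 0 := by
      refine Finset.sum_eq_zero fun i hi => ?_
      by_cases h : v = (a i).1
      · have hwle : ¬ 0 < w i := fun hp => (hno i hi hp) h.symm
        have : w i = 0 := le_antisymm (not_lt.mp hwle) (hw0 i hi)
        simp [this]
      · simp [h]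
    have hR : 0 < ∑ i ∈ t, (if v = (a i).2 then w i else 0) := by
      have hle : (if v = (a i0).2 then w i0 else 0)
          ≤ ∑ i ∈ t, (if v = (a i).2 then w i else 0) := by
        refine Finset.single_le_sum (f := fun i => if v = (a i).2 then w i else 0)
          (fun i hi => ?_) hi0
        by_cases h : v = (a i).2 <;> simp [h, hw0 i hi]
      have h0' : (0:ℝ) < (if v = (a i0).2 then w i0 else 0) := by
        simp [hqi0, hwi0]
      linarith
    rw [hflow v] at hL
    linarith
  have hstart : ∃ i ∈ t, 0 < w i := by
    by_contra hno
    push_neg at hno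
    have : ∑ i ∈ t, w i = 0 :=
      Finset.sum_eq_zero fun i hi => le_antisymm (hno i hi) (hw0 i hi)
    rw [hw1] at this
    norm_num at this
  obtain ⟨is, his, hwis⟩ := hstart
  have hstep : ∀ v : Fin (n + 1), ∃ v',
      (∃ i ∈ t, 0 < w i ∧ (a i).1 = v) →
        ((∃ i ∈ t, 0 < w i ∧ (a i).1 = v') ∧ (v, v') ∈ A) := by
    intro v
    by_cases hP : ∃ i ∈ t, 0 < w i ∧ (a i).1 = v
    · obtain ⟨i, hi, hwi, hpi⟩ := hP
      refine ⟨(a i).2, fun _ => ⟨key _ ⟨i, hi, hwi, rfl⟩, ?_⟩⟩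
      have : a i ∈ A := (ha i hi).1
      rw [← hpi]
      simpa using this
    · exact ⟨v, fun h => absurd h hP⟩
  choose g hg using hstep
  obtain ⟨f, hf0, hfs⟩ : ∃ f : ℕ → Fin (n + 1), f 0 = (a is).1 ∧
      ∀ k, f (k + 1) = g (f k) :=
    ⟨fun k => g^[k] (a is).1, rfl, fun k => Function.iterate_succ_apply' g k _⟩
  have hPf : ∀ k, ∃ i ∈ t, 0 < w i ∧ (a i).1 = f k := by
    intro k
    induction k with
    | zero => exact ⟨is, his, hwis, hf0.symm⟩
    | succ k ih =>
      rw [hfs k]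
      exact (hg (f k) ih).1
  have hA' : ∀ k, (f k, f (k + 1)) ∈ A := by
    intro k
    rw [hfs k]
    exact (hg (f k) (hPf k)).2
  have hne : ∀ k, f k ≠ f (k + 1) := by
    intro k h
    exact hloop _ (hA' k) (by simpa using h)
  obtain ⟨x, y, hxy, hfxy⟩ := Finite.exists_ne_map_eq_of_infinite f
  have hQ : ∃ j, ∃ i, i < j ∧ f i = f j := by
    rcases lt_or_gt_of_ne hxy with h | h
    · exact ⟨y, x, h, hfxy⟩
    · exact ⟨x, y, h, hfxy.symm⟩
  obtain ⟨i0, hij, hfij⟩ := Nat.find_spec hQ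
  have hmin : ∀ j < Nat.find hQ, ∀ i < j, f i ≠ f j := by
    intro j hj i hi
    have := Nat.find_min hQ hj
    push_neg at this
    exact this i hi
  set j0 := Nat.find hQ with hj0def
  clear_value j0
  have hr2 : i0 + 2 ≤ j0 := by
    by_contra h
    have hj1 : j0 = i0 + 1 := by omega
    rw [hj1] at hfij
    exact hne i0 hfij
  obtain ⟨m, hj0⟩ : ∃ m, j0 = i0 + (m + 2) := ⟨j0 - i0 - 2, by omega⟩
  refine ⟨m, fun s => f (i0 + s.val), ?_, ?_⟩
  · intro s1 s2 hs
    by_contra hne'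
    have hsv : (s1 : ℕ) ≠ (s2 : ℕ) := fun h => hne' (Fin.ext h)
    have hs1 : (s1 : ℕ) < m + 2 := s1.isLt
    have hs2 : (s2 : ℕ) < m + 2 := s2.isLt
    rcases lt_or_gt_of_ne hsv with h | h
    · exact hmin (i0 + s2) (by omega) (i0 + s1) (by omega) hs
    · exact hmin (i0 + s1) (by omega) (i0 + s2) (by omega) hs.symm
  · intro s
    have hval : ((s + 1 : Fin (m + 2)) : ℕ) = ((s : ℕ) + 1) % (m + 2) := by
      simp [Fin.add_def]
    by_cases hl : (s : ℕ) = m + 1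
    · have h0' : ((s + 1 : Fin (m + 2)) : ℕ) = 0 := by
        rw [hval, hl]
        simp
      simp only [h0', Nat.add_zero]
      have heq : f i0 = f ((i0 + (s : ℕ)) + 1) := by
        have : (i0 + (s : ℕ)) + 1 = j0 := by omega
        rw [this]
        exact hfij
      rw [heq]
      exact hA' _
    · have hlt : (s : ℕ) + 1 < m + 2 := by have := s.isLt; omega
      have h1 : ((s + 1 : Fin (m + 2)) : ℕ) = (s : ℕ) + 1 := by
        rw [hval, Nat.mod_eq_of_lt hlt]
      simp only [h1]
      have : i0 + ((s : ℕ) + 1) = (i0 + (s : ℕ)) + 1 := by omega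
      rw [this]
      exact hA' _
end

section
/- Let B be a building set on a nonempty finite set S and let C be a nonempty proper subset of S. Then the contraction C \ B = {I ⊆ S \ C : I ≠ ∅ and (I ∈ B or C ∪ I ∈ B)} is a building set on S \ C. -/
/-- The contraction `C \ B = {I ⊆ S \ C : I ≠ ∅, and I ∈ B or C ∪ I ∈ B}`. -/
def contract (B : Finset (Finset ℕ)) (S C : Finset ℕ) : Finset (Finset ℕ) :=
  (S \ C).powerset.filter (fun I => I.Nonempty ∧ (I ∈ B ∨ C ∪ I ∈ B))

/-- For a building set `B` on `S` and a nonempty proper subset `C ⊊ S`, the contraction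
`C \ B` is a building set on `S \ C`. -/
theorem stmt_13 (S : Finset ℕ) (hS : S.Nonempty) (B : Finset (Finset ℕ))
    (hB : IsBuilding S B) (C : Finset ℕ) (hCne : C.Nonempty) (hCS : C ⊂ S) :
    IsBuilding (S \ C) (contract B S C) := by
  obtain ⟨hsub, hunion, hsing⟩ := hB
  refine ⟨?_, ?_, ?_⟩
  · intro I hI
    simp only [contract, Finset.mem_filter, Finset.mem_powerset] at hI
    exact ⟨hI.1, hI.2.1⟩
  · intro I hI J hJ hIJ
    simp only [contract, Finset.mem_filter, Finset.mem_powerset] at hI hJ ⊢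
    refine ⟨Finset.union_subset hI.1 hJ.1, hI.2.1.mono Finset.subset_union_left, ?_⟩
    rcases hI.2.2 with hI' | hI' <;> rcases hJ.2.2 with hJ' | hJ'
    · exact Or.inl (hunion I hI' J hJ' hIJ)
    · refine Or.inr ?_
      have : I ∪ (C ∪ J) ∈ B := by
        refine hunion I hI' _ hJ' ?_
        obtain ⟨x, hx⟩ := hIJ
        simp only [Finset.mem_inter] at hx
        exact ⟨x, Finset.mem_inter.2 ⟨hx.1, Finset.mem_union_right _ hx.2⟩⟩
      have he : C ∪ (I ∪ J) = I ∪ (C ∪ J) := by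
        ext x; simp [Finset.mem_union] <;> tauto
      rwa [he]
    · refine Or.inr ?_
      have : (C ∪ I) ∪ J ∈ B := by
        refine hunion _ hI' J hJ' ?_
        obtain ⟨x, hx⟩ := hIJ
        simp only [Finset.mem_inter] at hx
        exact ⟨x, Finset.mem_inter.2 ⟨Finset.mem_union_right _ hx.1, hx.2⟩⟩
      have he : C ∪ (I ∪ J) = (C ∪ I) ∪ J := by
        ext x; simp [Finset.mem_union] <;> tauto
      rwa [he]
    · refine Or.inr ?_
      have : (C ∪ I) ∪ (C ∪ J) ∈ B := by
        refine hunion _ hI' _ hJ' ?_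
        obtain ⟨c, hc⟩ := hCne
        exact ⟨c, Finset.mem_inter.2 ⟨Finset.mem_union_left _ hc, Finset.mem_union_left _ hc⟩⟩
      have he : C ∪ (I ∪ J) = (C ∪ I) ∪ (C ∪ J) := by
        ext x; simp [Finset.mem_union] <;> tauto
      rwa [he]
  · intro i hi
    simp only [contract, Finset.mem_filter, Finset.mem_powerset]
    refine ⟨Finset.singleton_subset_iff.2 hi, Finset.singleton_nonempty i, Or.inl ?_⟩
    exact hsing i (Finset.mem_sdiff.1 hi).1
end

section
/- Let B be a connected building set on a finite set S with |S| ≤ 4. Then for all I_1, I_2 ∈ B with I_1 ∩ I_2 ≠ ∅, I_1 ⊄ I_2 and I_2 ⊄ I_1, at least one of the following holds: (i) I_1 ∩ I_2 ∈ B; (ii) I_1 ∪ I_2 = S and |(B|_{I_1 ∩ I_2})_max| ≤ 2. (Consequently, by the main theorem, every toric variety of dimension ≤ 3 associated to a connected building set is weak Fano.) -/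
/-
If `I₁ ∩ I₂` is a single point it is a singleton of `B`. Otherwise the two incomparable sets
each contribute a point outside their intersection, so `|I₁ ∪ I₂| ≥ |I₁ ∩ I₂| + 2 ≥ 4 ≥ |S|`:
hence `I₁ ∪ I₂ = S` and `|I₁ ∩ I₂| = 2`. The maximal elements of `B|_C` are pairwise disjoint
(two intersecting ones would have their union in `B|_C`), so there are at most `|C|` of them.
-/

lemma disjoint_of_mem_Bmax_restrict {S : Finset ℕ} {B : Finset (Finset ℕ)} (hB : IsBuilding S B)
    {C I J : Finset ℕ} (hI : I ∈ Bmax (restrict B C)) (hJ : J ∈ Bmax (restrict B C))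
    (hIJ : I ≠ J) : Disjoint I J := by
  rw [Bmax, Finset.mem_filter, restrict, Finset.mem_filter] at hI hJ
  obtain ⟨⟨hIB, hIC⟩, hImax⟩ := hI
  obtain ⟨⟨hJB, hJC⟩, hJmax⟩ := hJ
  by_contra hmeet
  rw [Finset.not_disjoint_iff_nonempty_inter] at hmeet
  have hunion : I ∪ J ∈ B.filter (· ⊆ C) :=
    Finset.mem_filter.mpr ⟨hB.2.1 I hIB J hJB hmeet, Finset.union_subset hIC hJC⟩
  exact hIJ ((hImax _ hunion Finset.subset_union_left).trans
    (hJmax _ hunion Finset.subset_union_right).symm)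

lemma card_Bmax_restrict_le {S : Finset ℕ} {B : Finset (Finset ℕ)} (hB : IsBuilding S B)
    (C : Finset ℕ) : (Bmax (restrict B C)).card ≤ C.card := by
  have hsub : ∀ I ∈ Bmax (restrict B C), I ∈ B ∧ I ⊆ C := fun I hI ↦
    Finset.mem_filter.mp (Finset.mem_filter.mp hI).1
  calc (Bmax (restrict B C)).card
      ≤ ((Bmax (restrict B C)).biUnion id).card :=
        Finset.card_le_card_biUnion
          (fun I hI J hJ hIJ ↦ disjoint_of_mem_Bmax_restrict hB hI hJ hIJ)
          (fun I hI ↦ (hB.1 I (hsub I hI).1).2)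
    _ ≤ C.card := Finset.card_le_card (Finset.biUnion_subset.mpr fun I hI ↦ (hsub I hI).2)

lemma card_inter_add_two_le_card_union {α : Type*} [DecidableEq α] {s t : Finset α}
    (hst : ¬s ⊆ t) (hts : ¬t ⊆ s) : (s ∩ t).card + 2 ≤ (s ∪ t).card := by
  have hs : (s ∩ t).card < s.card := Finset.card_lt_card (inf_lt_left.mpr hst)
  have ht : (s ∩ t).card < t.card := Finset.card_lt_card (inf_lt_right.mpr hts)
  have := Finset.card_union_add_card_inter s t
  omega

theorem stmt_14_general (S : Finset ℕ) (hcard : S.card ≤ 4)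
    (B : Finset (Finset ℕ)) (hB : IsBuilding S B)
    (I₁ I₂ : Finset ℕ) (hI₁ : I₁ ∈ B) (hI₂ : I₂ ∈ B)
    (hint : (I₁ ∩ I₂).Nonempty) (h12 : ¬I₁ ⊆ I₂) (h21 : ¬I₂ ⊆ I₁) :
    I₁ ∩ I₂ ∈ B ∨
      (I₁ ∪ I₂ = S ∧ (Bmax (restrict B (I₁ ∩ I₂))).card ≤ 2) := by
  have hunionS : I₁ ∪ I₂ ⊆ S := Finset.union_subset (hB.1 I₁ hI₁).1 (hB.1 I₂ hI₂).1
  have hgap : (I₁ ∩ I₂).card + 2 ≤ (I₁ ∪ I₂).card := card_inter_add_two_le_card_union h12 h21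
  have hunion_le := Finset.card_le_card hunionS
  rcases Nat.lt_or_ge (I₁ ∩ I₂).card 2 with hsmall | hlarge
  · left
    have hsingleton : (I₁ ∩ I₂).card = 1 := by have := hint.card_pos; omega
    obtain ⟨i, hi⟩ := Finset.card_eq_one.mp hsingleton
    rw [hi]
    exact hB.2.2 i (hunionS (Finset.inter_subset_union (hi ▸ Finset.mem_singleton_self i)))
  · right
    refine ⟨Finset.eq_of_subset_of_card_le hunionS (by omega), ?_⟩
    exact (card_Bmax_restrict_le hB _).trans (by omega)

/-- For a connected building set on a set `S` with `|S| ≤ 4`, the weak-Fano condition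
of the main theorem holds for every incomparable intersecting pair in `B`. -/
theorem stmt_14 (S : Finset ℕ) (hS : S.Nonempty) (hcard : S.card ≤ 4)
    (B : Finset (Finset ℕ)) (hB : IsBuilding S B) (hconn : Bmax B = {S})
    (I₁ I₂ : Finset ℕ) (hI₁ : I₁ ∈ B) (hI₂ : I₂ ∈ B)
    (hint : (I₁ ∩ I₂).Nonempty) (h12 : ¬I₁ ⊆ I₂) (h21 : ¬I₂ ⊆ I₁) :
    I₁ ∩ I₂ ∈ B ∨
      (I₁ ∪ I₂ = S ∧ (Bmax (restrict B (I₁ ∩ I₂))).card ≤ 2) :=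
  stmt_14_general S hcard B hB I₁ I₂ hI₁ hI₂ hint h12 h21
end

section
/- Let B be a connected building set on S = {1, …, n+1} and let N be a maximal nested set of B. Then the vectors {e_I : I ∈ N} form a ℤ-basis of the lattice ℤ^n, where e_1, …, e_n is the standard basis, e_{n+1} = −e_1 − ⋯ − e_n, and e_I = Σ_{i ∈ I} e_i. In particular |N| = n and the cone ℝ_{≥0}N = Σ_{I ∈ N} ℝ_{≥0} e_I is an n-dimensional nonsingular (unimodular) cone. -/
/-- Integral version of `eVec`. -/
def eVecZ (n : ℕ) (i : ℕ) : Fin n → ℤ :=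
  fun j => if i = (j : ℕ) + 1 then 1 else if i = n + 1 then -1 else 0

/-- `eSetZ n I = ∑ i ∈ I, e_i` over `ℤ`. -/
def eSetZ (n : ℕ) (I : Finset ℕ) : Fin n → ℤ := ∑ i ∈ I, eVecZ n i

/-!
For `I ∈ N ∪ {S}` let `ownPart I` be the set of elements of `I` lying in no smaller member of
`N ∪ {S}`. By laminarity these parts partition `S`, and `e_I` is the sum of the `e_i` over the
own parts of the members contained in `I`, a unitriangular relation. Each own part is nonempty,
for otherwise `I ∈ B` would be the disjoint union of the maximal members of `N` below it; and it
is a singleton by maximality of `N`: if it contained `i ≠ j`, the maximal element of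
`B|_(I \ {i})` through `j` could be added to `N`. Hence `|N| + 1 = |S| = n + 1`, and the `e_I`
span every `e_i` (using `e_S = 0` for the own part of `S`), so these `n` vectors span `ℤ^n` and
therefore form a basis.
-/

namespace Finset

variable {α : Type*} [DecidableEq α]

def IsLaminar (L : Finset (Finset α)) : Prop :=
  ∀ I ∈ L, ∀ J ∈ L, I ⊆ J ∨ J ⊆ I ∨ I ∩ J = ∅

def ownPart (L : Finset (Finset α)) (I : Finset α) : Finset α :=
  I.filter fun i => ∀ J ∈ L, J ⊂ I → i ∉ J

variable {L : Finset (Finset α)} {I J : Finset α} {i : α}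

theorem mem_ownPart : i ∈ ownPart L I ↔ i ∈ I ∧ ∀ J ∈ L, J ⊂ I → i ∉ J :=
  mem_filter

theorem ownPart_subset : ownPart L I ⊆ I := filter_subset _ _

theorem IsLaminar.insert {M : Finset α} (hL : IsLaminar L)
    (hM : ∀ K ∈ L, M ⊆ K ∨ K ⊆ M ∨ M ∩ K = ∅) : IsLaminar (insert M L) := by
  intro I hI J hJ
  rcases mem_insert.1 hI with rfl | hIL
  · rcases mem_insert.1 hJ with rfl | hJL
    exacts [Or.inl subset_rfl, hM J hJL]
  · rcases mem_insert.1 hJ with rfl | hJL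
    · rcases hM I hIL with h | h | h
      · exact Or.inr (Or.inl h)
      · exact Or.inl h
      · exact Or.inr (Or.inr (by rwa [inter_comm]))
    · exact hL I hIL J hJL

theorem ownPart_insert_of_subset {S : Finset α} (hI : I ⊆ S) :
    ownPart (insert S L) I = ownPart L I :=
  filter_congr fun _ _ => by
    simp only [forall_mem_insert, and_iff_right_iff_imp]
    exact fun _ hS => absurd (hS.trans_subset hI) (lt_irrefl S)

theorem exists_mem_ownPart (hI : I ∈ L) (hi : i ∈ I) :
    ∃ J ∈ L, J ⊆ I ∧ i ∈ ownPart L J := by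
  obtain ⟨J, hJ⟩ := exists_minimal (s := {K ∈ L | K ⊆ I ∧ i ∈ K})
    ⟨I, mem_filter.2 ⟨hI, subset_rfl, hi⟩⟩
  obtain ⟨hJL, hJI, hiJ⟩ := mem_filter.1 hJ.1
  refine ⟨J, hJL, hJI, mem_ownPart.2 ⟨hiJ, fun K hK hKJ hiK => ?_⟩⟩
  exact hKJ.not_subset (hJ.2 (mem_filter.2 ⟨hK, hKJ.subset.trans hJI, hiK⟩) hKJ.subset)

theorem IsLaminar.eq_of_mem_ownPart (hL : IsLaminar L) (hI : I ∈ L) (hJ : J ∈ L)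
    (hiI : i ∈ ownPart L I) (hiJ : i ∈ ownPart L J) : I = J := by
  rw [mem_ownPart] at hiI hiJ
  by_contra hne
  rcases hL I hI J hJ with h | h | h
  · exact hiJ.2 I hI (ssubset_iff_subset_ne.2 ⟨h, hne⟩) hiI.1
  · exact hiI.2 J hJ (ssubset_iff_subset_ne.2 ⟨h, Ne.symm hne⟩) hiJ.1
  · simpa [h] using mem_inter.2 ⟨hiI.1, hiJ.1⟩

theorem IsLaminar.pairwiseDisjoint_ownPart (hL : IsLaminar L) :
    (L : Set (Finset α)).PairwiseDisjoint (ownPart L) := fun _ hI _ hJ hne =>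
  disjoint_left.2 fun _ hiI hiJ => hne (hL.eq_of_mem_ownPart hI hJ hiI hiJ)

theorem biUnion_ownPart (hI : I ∈ L) : {J ∈ L | J ⊆ I}.biUnion (ownPart L) = I := by
  ext i
  simp only [mem_biUnion, mem_filter]
  constructor
  · rintro ⟨J, ⟨-, hJI⟩, hiJ⟩
    exact hJI (ownPart_subset hiJ)
  · intro hi
    obtain ⟨J, hJ, hJI, hiJ⟩ := exists_mem_ownPart hI hi
    exact ⟨J, ⟨hJ, hJI⟩, hiJ⟩

theorem IsLaminar.sum_eq_sum_ownPart {M : Type*} [AddCommMonoid M] (hL : IsLaminar L)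
    (hI : I ∈ L) (f : α → M) :
    ∑ i ∈ I, f i = ∑ J ∈ L with J ⊆ I, ∑ i ∈ ownPart L J, f i := by
  conv_lhs => rw [← biUnion_ownPart hI]
  exact sum_biUnion (hL.pairwiseDisjoint_ownPart.subset (coe_subset.2 (filter_subset _ _)))

theorem IsLaminar.sum_ownPart_mem_span {R M : Type*} [Ring R] [AddCommGroup M] [Module R M]
    (hL : IsLaminar L) (f : α → M) (hI : I ∈ L) :
    ∑ i ∈ ownPart L I, f i ∈ Submodule.span R ((fun K => ∑ i ∈ K, f i) '' L) := by
  induction I using strongInduction with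
  | H I ih =>
    have hmem : I ∈ {J ∈ L | J ⊆ I} := mem_filter.2 ⟨hI, subset_rfl⟩
    have hsplit : ∑ i ∈ ownPart L I, f i =
        ∑ i ∈ I, f i - ∑ J ∈ {J ∈ L | J ⊆ I}.erase I, ∑ i ∈ ownPart L J, f i := by
      rw [hL.sum_eq_sum_ownPart hI f, ← add_sum_erase _ _ hmem, add_sub_cancel_right]
    rw [hsplit]
    refine Submodule.sub_mem _ (Submodule.subset_span ⟨I, hI, rfl⟩) (Submodule.sum_mem _ ?_)
    intro J hJ
    obtain ⟨hJI, hJ⟩ := mem_erase.1 hJ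
    obtain ⟨hJ, hJsub⟩ := mem_filter.1 hJ
    exact ih J (ssubset_iff_subset_ne.2 ⟨hJsub, hJI⟩) hJ

theorem IsLaminar.inter_eq_empty_of_maximal (hL : IsLaminar L) {P : Finset α → Prop}
    (hI : I ∈ L) (hJ : J ∈ L) (hIP : Maximal P I) (hJP : Maximal P J) (hne : I ≠ J) :
    I ∩ J = ∅ := by
  rcases hL I hI J hJ with h | h | h
  · exact absurd (le_antisymm h (hIP.2 hJP.1 h)) hne
  · exact absurd (le_antisymm (hJP.2 hIP.1 h) h) hne
  · exact h

theorem union_sup_filter_eq {F : Finset (Finset α)}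
    (p : Finset α → Prop) [DecidablePred p] (hF : ∀ K ∈ F, K ⊆ I ∨ p K) :
    I ∪ {K ∈ F | p K}.sup id = I ∪ F.sup id := by
  refine subset_antisymm (union_subset_union_right (sup_mono (filter_subset _ _))) ?_
  refine union_subset subset_union_left (Finset.sup_le fun K hK => ?_)
  by_cases hpK : p K
  · exact (le_sup (f := id) (mem_filter.2 ⟨hK, hpK⟩)).trans subset_union_right
  · exact ((hF K hK).resolve_right hpK).trans subset_union_left

end Finset

open Finset

section

variable {S : Finset ℕ} {B N : Finset (Finset ℕ)}

theorem IsBuilding.exists_mem_Bmax_restrict (hB : IsBuilding S B) {T : Finset ℕ} {j : ℕ}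
    (hjT : j ∈ T) (hTS : T ⊆ S) : ∃ M ∈ Bmax (restrict B T), j ∈ M := by
  obtain ⟨M, hjM, hM⟩ := exists_le_maximal (restrict B T)
    (mem_filter.2 ⟨hB.2.2 j (hTS hjT), singleton_subset_iff.2 hjT⟩)
  exact ⟨M, mem_filter.2 ⟨hM.1, fun U hU hMU => le_antisymm hMU (hM.2 hU hMU)⟩,
    singleton_subset_iff.1 hjM⟩

theorem IsBuilding.subset_of_mem_Bmax_restrict (hB : IsBuilding S B) {T M U : Finset ℕ}
    (hM : M ∈ Bmax (restrict B T)) (hU : U ∈ restrict B T) (hUM : (U ∩ M).Nonempty) :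
    U ⊆ M := by
  obtain ⟨hMr, hMmax⟩ := mem_filter.1 hM
  obtain ⟨hMB, hMT⟩ := mem_filter.1 hMr
  obtain ⟨hUB, hUT⟩ := mem_filter.1 hU
  have hUM_mem : U ∪ M ∈ restrict B T :=
    mem_filter.2 ⟨hB.2.1 U hUB M hMB hUM, union_subset hUT hMT⟩
  rw [hMmax _ hUM_mem subset_union_right]
  exact subset_union_left

theorem mem_of_Bmax_eq_singleton (hconn : Bmax B = {S}) : S ∈ B :=
  filter_subset _ _ (hconn ▸ mem_singleton_self S)

namespace IsNested

theorem subset (hN : IsNested B N) : N ⊆ B := fun _ hJ => (mem_sdiff.1 (hN.1 hJ)).1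

theorem notMem_of_Bmax_eq_singleton (hN : IsNested B N) (hconn : Bmax B = {S}) : S ∉ N :=
  fun hS => by simpa [hconn] using (mem_sdiff.1 (hN.1 hS)).2

theorem isLaminar (hN : IsNested B N) : IsLaminar N := hN.2.1

theorem isLaminar_insert (hN : IsNested B N) (hB : IsBuilding S B) : IsLaminar (insert S N) :=
  hN.isLaminar.insert fun K hK => Or.inr (Or.inl (hB.1 K (hN.subset hK)).1)

theorem ownPart_nonempty (hN : IsNested B N) (hB : IsBuilding S B) {I : Finset ℕ} (hI : I ∈ B) :
    (ownPart N I).Nonempty := by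
  classical
  by_contra hempty
  rw [not_nonempty_iff_eq_empty] at hempty
  set T := {K ∈ N | K ⊂ I}
  set C := {K ∈ T | Maximal (· ∈ T) K}
  have hCT : C ⊆ T := filter_subset _ _
  have hcover : C.sup id = I := by
    refine subset_antisymm (Finset.sup_le fun K hK => (mem_filter.1 (hCT hK)).2.subset)
      fun i hi => ?_
    have : i ∉ ownPart N I := by simp [hempty]
    obtain ⟨K, hKN, hKI, hiK⟩ : ∃ K ∈ N, K ⊂ I ∧ i ∈ K := by
      simpa [mem_ownPart, hi] using this
    obtain ⟨K', hKK', hK'⟩ := exists_le_maximal T (mem_filter.2 ⟨hKN, hKI⟩)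
    exact mem_sup.2 ⟨K', mem_filter.2 ⟨hK'.1, hK'⟩, hKK' hiK⟩
  have hdisj : ∀ J ∈ C, ∀ K ∈ C, J ≠ K → J ∩ K = ∅ := fun J hJ K hK =>
    hN.isLaminar.inter_eq_empty_of_maximal (mem_filter.1 (hCT hJ)).1 (mem_filter.1 (hCT hK)).1
      (mem_filter.1 hJ).2 (mem_filter.1 hK).2
  have hcard : 2 ≤ C.card := by
    by_contra! hlt
    obtain ⟨K, hK⟩ := card_le_one_iff_subset_singleton.1 (Nat.le_of_lt_succ hlt)
    have hIK : I ⊆ K := hcover ▸ Finset.sup_le fun J hJ => (mem_singleton.1 (hK hJ)).le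
    obtain ⟨i, hi⟩ := (hB.1 I hI).2
    obtain ⟨J, hJ, -⟩ := mem_sup.1 (hcover.symm ▸ hi : i ∈ C.sup id)
    obtain rfl := mem_singleton.1 (hK hJ)
    exact (mem_filter.1 (hCT hJ)).2.not_subset hIK
  exact hN.2.2 C (hCT.trans (filter_subset _ _)) hcard hdisj (hcover ▸ hI)

variable {I M : Finset ℕ} {i : ℕ}

theorem subset_erase_or_subset_or_inter_eq_empty (hN : IsNested B N) (hB : IsBuilding S B)
    (hI : I ∈ insert S N) (hi : i ∈ ownPart N I) {K : Finset ℕ} (hK : K ∈ N) :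
    K ⊆ I.erase i ∨ I ⊆ K ∨ K ∩ I = ∅ := by
  rcases hN.isLaminar_insert hB K (mem_insert_of_mem hK) I hI with h | h | h
  · by_cases hiK : i ∈ K
    · refine Or.inr (Or.inl ?_)
      by_contra hIK
      exact (mem_ownPart.1 hi).2 K hK (ssubset_of_subset_not_subset h hIK) hiK
    · exact Or.inl (subset_erase.2 ⟨h, hiK⟩)
  · exact Or.inr (Or.inl h)
  · exact Or.inr (Or.inr h)

theorem subset_erase_or_inter_eq_empty (hN : IsNested B N) (hB : IsBuilding S B)
    (hI : I ∈ insert S N) (hi : i ∈ ownPart N I) (hM : M ∈ Bmax (restrict B (I.erase i)))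
    {K : Finset ℕ} (hK : K ∈ N) (hKM : K ∩ M = ∅) : K ⊆ I.erase i ∨ K ∩ I = ∅ := by
  obtain ⟨hMB, hMI⟩ := mem_filter.1 (mem_filter.1 hM).1
  rcases hN.subset_erase_or_subset_or_inter_eq_empty hB hI hi hK with h | h | h
  · exact Or.inl h
  · obtain ⟨x, hx⟩ := (hB.1 M hMB).2
    simpa [hKM] using mem_inter.2 ⟨h (erase_subset i I (hMI hx)), hx⟩
  · exact Or.inr h

theorem isLaminar_insert_of_mem_Bmax_restrict (hN : IsNested B N) (hB : IsBuilding S B)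
    (hI : I ∈ insert S N) (hi : i ∈ ownPart N I) (hM : M ∈ Bmax (restrict B (I.erase i))) :
    IsLaminar (insert M N) := by
  obtain ⟨hMB, hMI⟩ := mem_filter.1 (mem_filter.1 hM).1
  refine hN.isLaminar.insert fun K hK => ?_
  by_cases hMK : M ∩ K = ∅
  · exact Or.inr (Or.inr hMK)
  rcases hN.subset_erase_or_subset_or_inter_eq_empty hB hI hi hK with h | h | h
  · refine Or.inr (Or.inl
      (hB.subset_of_mem_Bmax_restrict hM (mem_filter.2 ⟨hN.subset hK, h⟩) ?_))
    rwa [inter_comm, nonempty_iff_ne_empty]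
  · exact Or.inl ((hMI.trans (erase_subset i I)).trans h)
  · refine absurd (subset_empty.1 ?_) hMK
    rw [← h, inter_comm K]
    exact inter_subset_inter_right (hMI.trans (erase_subset i I))

theorem union_sup_notMem (hN : IsNested B N) (hB : IsBuilding S B) (hI : I ∈ N)
    {F : Finset (Finset ℕ)} (hFN : F ⊆ N) (hFne : F.Nonempty)
    (hdisj : ∀ J ∈ F, ∀ K ∈ F, J ≠ K → J ∩ K = ∅)
    (hFI : ∀ K ∈ F, K ∩ I = ∅) : I ∪ F.sup id ∉ B := by
  have hIF : I ∉ F := fun h => by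
    obtain ⟨x, hx⟩ := (hB.1 I (hN.subset hI)).2
    simpa [hFI I h] using mem_inter.2 ⟨hx, hx⟩
  have hcard : 2 ≤ (insert I F).card := by
    rw [card_insert_of_notMem hIF]
    exact Nat.succ_le_succ (card_pos.2 hFne)
  have hdisj' : ∀ J ∈ insert I F, ∀ K ∈ insert I F, J ≠ K → J ∩ K = ∅ := by
    intro J hJ K hK hJK
    rcases mem_insert.1 hJ with rfl | hJF <;> rcases mem_insert.1 hK with rfl | hKF
    · exact absurd rfl hJK
    · rw [inter_comm]; exact hFI K hKF
    · exact hFI J hJF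
    · exact hdisj J hJF K hKF hJK
  simpa using hN.2.2 _ (insert_subset hI hFN) hcard hdisj'

theorem mem_of_inter_eq_empty (hN : IsNested B N) (hB : IsBuilding S B) (hI : I ∈ insert S N)
    {K : Finset ℕ} (hK : K ∈ N) (hKI : K ∩ I = ∅) : I ∈ N := by
  refine (mem_insert.1 hI).resolve_left fun hIS => ?_
  obtain ⟨hKS, x, hx⟩ := hB.1 K (hN.subset hK)
  exact notMem_empty x (hKI ▸ mem_inter.2 ⟨hx, hIS ▸ hKS hx⟩)

theorem sup_notMem_of_mem_Bmax_restrict (hN : IsNested B N) (hB : IsBuilding S B)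
    (hI : I ∈ insert S N) (hi : i ∈ ownPart N I) (hM : M ∈ Bmax (restrict B (I.erase i)))
    {F : Finset (Finset ℕ)} (hF : F ⊆ insert M N) (hFcard : 2 ≤ F.card)
    (hdisj : ∀ J ∈ F, ∀ K ∈ F, J ≠ K → J ∩ K = ∅) : F.sup id ∉ B := by
  obtain ⟨hMB, hMI⟩ := mem_filter.1 (mem_filter.1 hM).1
  obtain ⟨m, hm⟩ := (hB.1 M hMB).2
  have hmemN : ∀ K ∈ F, K ≠ M → K ∈ N := fun K hK hKM =>
    (mem_insert.1 (hF hK)).resolve_left hKM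
  refine (em (M ∈ F)).elim (fun hMF => ?_) fun hMF =>
    hN.2.2 F (fun K hK => hmemN K hK (ne_of_mem_of_not_mem hK hMF)) hFcard hdisj
  intro hU
  have hMU : M ⊆ F.sup id := le_sup (f := id) hMF
  have hsplit : ∀ K ∈ F, K ⊆ I.erase i ∨ K ∩ I = ∅ := fun K hK => by
    by_cases hKM : K = M
    · exact Or.inl (hKM ▸ hMI)
    · exact hN.subset_erase_or_inter_eq_empty hB hI hi hM (hmemN K hK hKM) (hdisj K hK M hMF hKM)
  by_cases hout : ∃ K ∈ F, K ∩ I = ∅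
  · -- `I` and the members of `F` outside `I` are disjoint members of `N` with union in `B`
    obtain ⟨K₀, hK₀F, hK₀I⟩ := hout
    have hne_M : ∀ K, K ∩ I = ∅ → K ≠ M := by
      rintro K hKI rfl
      simpa [hKI] using mem_inter.2 ⟨hm, erase_subset i I (hMI hm)⟩
    have hIN := hN.mem_of_inter_eq_empty hB hI (hmemN K₀ hK₀F (hne_M K₀ hK₀I)) hK₀I
    refine hN.union_sup_notMem hB hIN (F := {K ∈ F | K ∩ I = ∅})
      (fun K hK => hmemN K (mem_filter.1 hK).1 (hne_M K (mem_filter.1 hK).2))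
      ⟨K₀, mem_filter.2 ⟨hK₀F, hK₀I⟩⟩
      (fun J hJ K hK => hdisj J (mem_filter.1 hJ).1 K (mem_filter.1 hK).1)
      (fun K hK => (mem_filter.1 hK).2) ?_
    rw [union_sup_filter_eq _ fun K hK => (hsplit K hK).imp_left (·.trans (erase_subset i I))]
    exact hB.2.1 I (hN.subset hIN) _ hU ⟨m, mem_inter.2 ⟨erase_subset i I (hMI hm), hMU hm⟩⟩
  · -- `F.sup id ∈ B|_(I \ {i})` meets `M`, so lies in `M`, which misses the members of `F \ {M}`
    have hUM : F.sup id ⊆ M := hB.subset_of_mem_Bmax_restrict hM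
      (mem_filter.2 ⟨hU, Finset.sup_le fun K hK =>
        (hsplit K hK).resolve_right fun h => hout ⟨K, hK, h⟩⟩)
      (by rw [inter_eq_right.2 hMU]; exact ⟨m, hm⟩)
    obtain ⟨K, hKF, hKM⟩ := exists_mem_ne (by omega : 1 < F.card) M
    obtain ⟨x, hx⟩ := (hB.1 K (hN.subset (hmemN K hKF hKM))).2
    simpa [hdisj K hKF M hMF hKM] using mem_inter.2 ⟨hx, hUM (le_sup (f := id) hKF hx)⟩

theorem subset_of_mem_insert (hN : IsNested B N) (hB : IsBuilding S B) (hI : I ∈ insert S N) :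
    I ⊆ S := by
  rcases mem_insert.1 hI with rfl | hIN
  exacts [subset_rfl, (hB.1 I (hN.subset hIN)).1]

theorem isNested_insert_of_mem_Bmax_restrict (hN : IsNested B N) (hB : IsBuilding S B)
    (hconn : Bmax B = {S}) (hI : I ∈ insert S N) (hi : i ∈ ownPart N I)
    (hM : M ∈ Bmax (restrict B (I.erase i))) : IsNested B (insert M N) := by
  obtain ⟨hMB, hMI⟩ := mem_filter.1 (mem_filter.1 hM).1
  have hMS : M ≠ S := fun h =>
    notMem_erase i I (hMI (h ▸ hN.subset_of_mem_insert hB hI (ownPart_subset hi)))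
  exact ⟨insert_subset (mem_sdiff.2 ⟨hMB, by simpa [hconn] using hMS⟩) hN.1,
    hN.isLaminar_insert_of_mem_Bmax_restrict hB hI hi hM,
    fun _ hF => hN.sup_notMem_of_mem_Bmax_restrict hB hI hi hM hF⟩

end IsNested

namespace MaxNested

variable {I : Finset ℕ}

theorem card_ownPart (hN : MaxNested B N) (hB : IsBuilding S B) (hconn : Bmax B = {S})
    (hI : I ∈ insert S N) : (ownPart N I).card = 1 := by
  have hIS := hN.1.subset_of_mem_insert hB hI
  have hIB : I ∈ B := by
    rcases mem_insert.1 hI with rfl | hIN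
    exacts [mem_of_Bmax_eq_singleton hconn, hN.1.subset hIN]
  refine le_antisymm (card_le_one.2 fun i hi j hj => ?_) (card_pos.2 (hN.1.ownPart_nonempty hB hIB))
  by_contra hij
  have hjI : j ∈ I.erase i := mem_erase.2 ⟨Ne.symm hij, ownPart_subset hj⟩
  obtain ⟨M, hM, hjM⟩ := hB.exists_mem_Bmax_restrict hjI ((erase_subset i I).trans hIS)
  have hMN : M ∈ N := by
    rw [hN.2 _ (hN.1.isNested_insert_of_mem_Bmax_restrict hB hconn hI hi hM) (subset_insert M N)]
    exact mem_insert_self M N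
  have hMI : M ⊂ I :=
    ((mem_filter.1 (mem_filter.1 hM).1).2).trans_ssubset (erase_ssubset (ownPart_subset hi))
  exact (mem_ownPart.1 hj).2 M hMN hMI hjM

theorem card_ownPart_insert (hN : MaxNested B N) (hB : IsBuilding S B) (hconn : Bmax B = {S})
    (hI : I ∈ insert S N) : (ownPart (insert S N) I).card = 1 := by
  rw [ownPart_insert_of_subset (hN.1.subset_of_mem_insert hB hI)]
  exact hN.card_ownPart hB hconn hI

theorem card_add_one (hN : MaxNested B N) (hB : IsBuilding S B) (hconn : Bmax B = {S}) :
    N.card + 1 = S.card := by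
  have hall : {J ∈ insert S N | J ⊆ S} = insert S N :=
    filter_true_of_mem fun J hJ => hN.1.subset_of_mem_insert hB hJ
  have hcover := biUnion_ownPart (L := insert S N) (mem_insert_self S N)
  rw [hall] at hcover
  calc N.card + 1 = (insert S N).card :=
        (card_insert_of_notMem (hN.1.notMem_of_Bmax_eq_singleton hconn)).symm
    _ = ∑ J ∈ insert S N, (ownPart (insert S N) J).card := by
      rw [sum_congr rfl fun J hJ => hN.card_ownPart_insert hB hconn hJ, card_eq_sum_ones]
    _ = S.card := by
      rw [← card_biUnion (hN.1.isLaminar_insert hB).pairwiseDisjoint_ownPart, hcover]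

theorem mem_span {R V : Type*} [Ring R] [AddCommGroup V] [Module R V] (hN : MaxNested B N)
    (hB : IsBuilding S B) (hconn : Bmax B = {S}) (f : ℕ → V) (hf : ∑ i ∈ S, f i = 0)
    {i : ℕ} (hi : i ∈ S) : f i ∈ Submodule.span R ((fun K => ∑ i ∈ K, f i) '' N) := by
  obtain ⟨J, hJ, -, hiJ⟩ := exists_mem_ownPart (mem_insert_self S N) hi
  obtain ⟨a, ha⟩ := card_eq_one.1 (hN.card_ownPart_insert hB hconn hJ)
  rw [ha, mem_singleton] at hiJ
  subst hiJ
  have hspan := (hN.1.isLaminar_insert hB).sum_ownPart_mem_span (R := R) f hJ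
  rwa [ha, sum_singleton, coe_insert, Set.image_insert_eq, hf,
    Submodule.span_insert_zero] at hspan

end MaxNested

end

theorem eVecZ_succ {n : ℕ} (k : Fin n) : eVecZ n (k + 1) = Pi.single k 1 := by
  ext l
  by_cases hkl : k = l
  · subst hkl; simp [eVecZ]
  · have hkl' : (k : ℕ) ≠ l := fun h => hkl (Fin.ext h)
    simp [eVecZ, Ne.symm hkl, hkl', k.isLt.ne]

theorem sum_eVecZ_Icc (n : ℕ) : ∑ i ∈ Icc 1 (n + 1), eVecZ n i = 0 := by
  ext l
  have hsplit (i : ℕ) :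
      eVecZ n i l = (if i = l + 1 then 1 else 0) + (if i = n + 1 then -1 else 0) := by
    unfold eVecZ
    split_ifs <;> omega
  simp only [Finset.sum_apply, hsplit, sum_add_distrib, sum_ite_eq', mem_Icc]
  simp

/-- For a connected building set `B` on `S = {1, …, n+1}` and a maximal nested set `N`,
the vectors `e_I` for `I ∈ N` form a `ℤ`-basis of `ℤ^n` (so `|N| = n` and the cone on
`N` is unimodular). -/
theorem stmt_15 (n : ℕ) (B : Finset (Finset ℕ))
    (hB : IsBuilding (Finset.Icc 1 (n + 1)) B)
    (hconn : Bmax B = {Finset.Icc 1 (n + 1)})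
    (N : Finset (Finset ℕ)) (hN : MaxNested B N) :
    N.card = n ∧ ∃ b : Module.Basis (Fin n) ℤ (Fin n → ℤ),
      Set.range b = {v : Fin n → ℤ | ∃ I ∈ N, v = eSetZ n I} := by
  have hcard : N.card = n := by simpa using hN.card_add_one hB hconn
  have hspan : ⊤ ≤ Submodule.span ℤ (eSetZ n '' N) := by
    rw [← (Pi.basisFun ℤ (Fin n)).span_eq, Submodule.span_le]
    rintro _ ⟨k, rfl⟩
    rw [Pi.basisFun_apply, ← eVecZ_succ]
    exact hN.mem_span hB hconn (eVecZ n) (sum_eVecZ_Icc n) (by simp)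
  let b : Fin n → Fin n → ℤ := fun k => eSetZ n (N.equivFinOfCardEq hcard |>.symm k)
  have hrange : Set.range b = eSetZ n '' N := by
    rw [Set.image_eq_range, ← (N.equivFinOfCardEq hcard).symm.surjective.range_comp]
    rfl
  refine ⟨hcard, basisOfTopLeSpanOfCardEqFinrank b (hrange ▸ hspan) (by simp), ?_⟩
  rw [coe_basisOfTopLeSpanOfCardEqFinrank, hrange]
  ext v
  simp [eq_comm]
end

section
/- Let B be a connected building set on S = {1, …, n+1}. Then the cones ℝ_{≥0}N = Σ_{I ∈ N} ℝ_{≥0} e_I, as N ranges over all nested sets of B, cover ℝ^n: for every x ∈ ℝ^n there exists a nested set N of B with x ∈ ℝ_{≥0}N. -/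
/-!
Since `e_1 + ⋯ + e_{n+1} = 0`, subtracting the smallest coefficient writes any `x` as a
nonnegative combination of the `e_i` with `i` in a proper subset of `S`; sorting the coefficients
turns this into a nonnegative combination of the `e_C` over a chain of proper subsets `C` of `S`.
Each `e_C` is the sum of the `e_K` over the `B`-components `K` of `C` (the maximal members of `B`
inside `C`, which partition `C`), and the components of all members of a chain form a nested set:
a component absorbs every member of `B` that it meets inside a larger member of the chain.
-/

open Finset

section Decomposition

variable {ι R M : Type*} [DecidableEq ι] [AddCommMonoid M]

theorem exists_isChain_sum_smul_eq [Module ℝ M] (v : ι → M) (s : Finset ι) (t : ι → ℝ)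
    (ht : ∀ i ∈ s, 0 ≤ t i) :
    ∃ T : Finset (Finset ι), ∃ a : Finset ι → ℝ,
      (∀ C ∈ T, C ⊆ s) ∧ IsChain (· ⊆ ·) (T : Set (Finset ι)) ∧ (∀ C, 0 ≤ a C) ∧
      ∑ i ∈ s, t i • v i = ∑ C ∈ T, a C • ∑ i ∈ C, v i := by
  induction s using Finset.strongInduction generalizing t with
  | H s ih =>
  rcases s.eq_empty_or_nonempty with rfl | hs
  · exact ⟨∅, 0, by simp, by simp, fun _ => le_rfl, by simp⟩
  obtain ⟨i₀, hi₀, hmin⟩ := s.exists_min_image t hs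
  set s' := s.filter fun i => t i₀ < t i
  have hs' : s' ⊂ s := filter_ssubset.2 ⟨i₀, hi₀, lt_irrefl _⟩
  obtain ⟨T, a, hTs, hT, ha, hsum⟩ :=
    ih s' hs' (fun i => t i - t i₀) fun i hi => sub_nonneg.2 (mem_filter.1 hi).2.le
  have hsT : s ∉ T := fun h => hs'.ne (subset_antisymm (hTs s h) hs'.subset).symm
  have hsplit : ∑ i ∈ s, t i • v i = t i₀ • ∑ i ∈ s, v i + ∑ i ∈ s', (t i - t i₀) • v i := by
    rw [sum_filter_of_ne, smul_sum, ← sum_add_distrib]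
    · exact sum_congr rfl fun i _ => by rw [← add_smul, add_sub_cancel]
    · intro i hi hne
      exact (hmin i hi).lt_of_ne fun h => hne (by simp [h])
  refine ⟨insert s T, Function.update a s (t i₀), ?_, ?_, ?_, ?_⟩
  · intro C hC
    rcases mem_insert.1 hC with rfl | hC
    exacts [subset_rfl, (hTs C hC).trans hs'.subset]
  · rw [coe_insert]
    exact hT.insert fun C hC _ => Or.inr ((hTs C hC).trans hs'.subset)
  · intro C
    rcases eq_or_ne C s with rfl | hC
    · simpa using ht i₀ hi₀
    · simpa [hC] using ha C
  · rw [hsplit, hsum, sum_insert hsT, Function.update_self]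
    congr 1
    exact sum_congr rfl fun C hC => by rw [Function.update_of_ne (ne_of_mem_of_not_mem hC hsT)]

theorem sum_smul_sum_eq_sum_biUnion {α β : Type*} [DecidableEq β] [Semiring R] [Module R M]
    (T : Finset α) (f : α → Finset β) (a : α → R) (g : β → M) :
    ∑ C ∈ T, a C • ∑ J ∈ f C, g J = ∑ J ∈ T.biUnion f, (∑ C ∈ T with J ∈ f C, a C) • g J := by
  simp_rw [smul_sum, sum_smul]
  exact sum_comm' fun C J => by simp only [mem_biUnion, mem_filter]; grind

end Decomposition

theorem sum_Icc_smul_eVec_apply (n : ℕ) (y : ℕ → ℝ) (j : Fin n) :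
    (∑ i ∈ Icc 1 (n + 1), y i • eVec n i) j = y (j + 1) - y (n + 1) := by
  have hj := j.isLt
  rw [Finset.sum_apply, ← sum_subset (s₁ := {(j : ℕ) + 1, n + 1})]
  · rw [sum_pair (by omega)]
    simp [eVec, show n ≠ (j : ℕ) by omega]
    ring
  · intro i
    simp
    omega
  · intro i _ hi
    simp only [mem_insert, mem_singleton, not_or] at hi
    simp [eVec, hi.1, hi.2]

theorem exists_ssubset_Icc_nonneg_sum_smul_eVec (n : ℕ) (x : Fin n → ℝ) :
    ∃ P ⊂ Icc 1 (n + 1), ∃ t : ℕ → ℝ, (∀ i ∈ P, 0 ≤ t i) ∧ x = ∑ i ∈ P, t i • eVec n i := by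
  set S := Icc 1 (n + 1)
  let y : ℕ → ℝ := fun i => if h : i - 1 < n then x ⟨i - 1, h⟩ else 0
  obtain ⟨i₀, hi₀, hmin⟩ := S.exists_min_image y ⟨n + 1, by simp [S]⟩
  refine ⟨S.filter fun i => y i₀ < y i, filter_ssubset.2 ⟨i₀, hi₀, lt_irrefl _⟩,
    fun i => y i - y i₀, fun i hi => sub_nonneg.2 (hmin i (mem_filter.1 hi).1), ?_⟩
  rw [sum_filter_of_ne]
  · funext j
    rw [sum_Icc_smul_eVec_apply]
    simp [y]
  · intro i hi hne
    exact (hmin i hi).lt_of_ne fun h => hne (by simp [h])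

def components (B : Finset (Finset ℕ)) (C : Finset ℕ) : Finset (Finset ℕ) :=
  Bmax (restrict B C)

section Components

variable {S C K : Finset ℕ} {B : Finset (Finset ℕ)}

theorem mem_components :
    K ∈ components B C ↔ (K ∈ B ∧ K ⊆ C) ∧ ∀ J ∈ B, J ⊆ C → K ⊆ J → K = J := by
  simp only [components, Bmax, _root_.restrict, mem_filter, and_imp]

theorem mem_of_mem_components (hK : K ∈ components B C) : K ∈ B :=
  (mem_components.1 hK).1.1

theorem subset_of_mem_components (hK : K ∈ components B C) : K ⊆ C :=
  (mem_components.1 hK).1.2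

theorem subset_component_of_inter_nonempty (hB : IsBuilding S B) {J : Finset ℕ} (hJ : J ∈ B)
    (hJC : J ⊆ C) (hK : K ∈ components B C) (hJK : (J ∩ K).Nonempty) : J ⊆ K := by
  have hunion := (mem_components.1 hK).2 (J ∪ K) (hB.2.1 J hJ K (mem_of_mem_components hK) hJK)
    (union_subset hJC (subset_of_mem_components hK)) subset_union_right
  exact hunion ▸ subset_union_left

theorem pairwiseDisjoint_components (hB : IsBuilding S B) :
    (components B C : Set (Finset ℕ)).PairwiseDisjoint id := by
  intro K hK K' hK' hne
  rw [Function.onFun, id, id, disjoint_iff_inter_eq_empty, ← not_nonempty_iff_eq_empty]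
  intro hmeet
  exact hne (subset_antisymm
    (subset_component_of_inter_nonempty hB (mem_of_mem_components hK)
      (subset_of_mem_components hK) hK' hmeet)
    (subset_component_of_inter_nonempty hB (mem_of_mem_components hK')
      (subset_of_mem_components hK') hK (by rwa [inter_comm])))

theorem exists_mem_components (hB : IsBuilding S B) (hCS : C ⊆ S) {i : ℕ} (hi : i ∈ C) :
    ∃ K ∈ components B C, i ∈ K := by
  have hi' : {i} ∈ _root_.restrict B C :=
    mem_filter.2 ⟨hB.2.2 i (hCS hi), singleton_subset_iff.2 hi⟩
  obtain ⟨K, hiK, hK, hmax⟩ := (_root_.restrict B C).exists_le_maximal hi'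
  refine ⟨K, mem_filter.2 ⟨hK, fun J hJ hKJ => subset_antisymm hKJ (hmax hJ hKJ)⟩,
    singleton_subset_iff.1 hiK⟩

theorem biUnion_components (hB : IsBuilding S B) (hCS : C ⊆ S) :
    (components B C).biUnion id = C := by
  refine subset_antisymm (biUnion_subset.2 fun K hK => subset_of_mem_components hK) fun i hi => ?_
  obtain ⟨K, hK, hiK⟩ := exists_mem_components hB hCS hi
  exact mem_biUnion.2 ⟨K, hK, hiK⟩

theorem sum_eq_sum_components {M : Type*} [AddCommMonoid M] (hB : IsBuilding S B) (hCS : C ⊆ S)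
    (v : ℕ → M) : ∑ i ∈ C, v i = ∑ K ∈ components B C, ∑ i ∈ K, v i := by
  conv_lhs => rw [← biUnion_components hB hCS]
  exact sum_biUnion (pairwiseDisjoint_components hB)

end Components

section Nested

variable {S : Finset ℕ} {B T : Finset (Finset ℕ)}

theorem subset_or_inter_eq_empty_of_mem_components (hB : IsBuilding S B) {C C' I J : Finset ℕ}
    (hCC' : C ⊆ C') (hI : I ∈ components B C) (hJ : J ∈ components B C') :
    I ⊆ J ∨ I ∩ J = ∅ := by
  rw [or_iff_not_imp_right, ← ne_eq, ← nonempty_iff_ne_empty]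
  exact subset_component_of_inter_nonempty hB (mem_of_mem_components hI)
    ((subset_of_mem_components hI).trans hCC') hJ

/-- Let `C` be the largest member of the chain having a component `I ∈ F`. Then `⋃ F ⊆ C` lies
in `B` and contains `I`, so equals `I` by maximality, leaving no room for a second member of `F`
disjoint from `I`. -/
theorem sup_notMem_of_subset_biUnion_components (hB : IsBuilding S B)
    (hT : IsChain (· ⊆ ·) (T : Set (Finset ℕ))) {F : Finset (Finset ℕ)}
    (hFT : F ⊆ T.biUnion (components B)) (hF : 2 ≤ #F)
    (hdisj : ∀ I ∈ F, ∀ J ∈ F, I ≠ J → I ∩ J = ∅) : F.sup id ∉ B := by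
  intro hU
  set T' := T.filter fun C => ∃ I ∈ F, I ∈ components B C
  have hT' : T'.Nonempty := by
    obtain ⟨I, hI⟩ := card_pos.1 (by omega : 0 < #F)
    obtain ⟨C, hC, hIC⟩ := mem_biUnion.1 (hFT hI)
    exact ⟨C, mem_filter.2 ⟨hC, I, hI, hIC⟩⟩
  obtain ⟨C, hCT', hCmax⟩ := T'.exists_maximal hT'
  obtain ⟨hC, I, hI, hIC⟩ := mem_filter.1 hCT'
  have hFC : ∀ J ∈ F, J ⊆ C := by
    intro J hJ
    obtain ⟨C', hC', hJC'⟩ := mem_biUnion.1 (hFT hJ)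
    have hC'T' : C' ∈ T' := mem_filter.2 ⟨hC', J, hJ, hJC'⟩
    refine (subset_of_mem_components hJC').trans ?_
    rcases hT.total (mem_coe.2 hC') (mem_coe.2 hC) with h | h
    exacts [h, hCmax hC'T' h]
  have hIU : I = F.sup id :=
    (mem_components.1 hIC).2 _ hU (Finset.sup_le hFC) (le_sup (f := id) hI)
  obtain ⟨J, hJ, hJI⟩ := exists_mem_ne hF I
  obtain ⟨_, _, hJB⟩ := mem_biUnion.1 (hFT hJ)
  obtain ⟨i, hi⟩ := (hB.1 J (mem_of_mem_components hJB)).2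
  have hiI : i ∈ I := hIU ▸ le_sup (f := id) hJ hi
  simpa [hdisj J hJ I hI hJI] using mem_inter.2 ⟨hi, hiI⟩

theorem isNested_biUnion_components (hB : IsBuilding S B) (hconn : Bmax B = {S})
    (hT : IsChain (· ⊆ ·) (T : Set (Finset ℕ))) (hTS : ∀ C ∈ T, C ⊂ S) :
    IsNested B (T.biUnion (components B)) := by
  refine ⟨fun J hJ => ?_, fun I hI J hJ => ?_,
    fun F hF => sup_notMem_of_subset_biUnion_components hB hT hF⟩
  · obtain ⟨C, hC, hJC⟩ := mem_biUnion.1 hJ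
    rw [mem_sdiff, hconn, mem_singleton]
    exact ⟨mem_of_mem_components hJC,
      ((subset_of_mem_components hJC).trans_ssubset (hTS C hC)).ne⟩
  · obtain ⟨C, hC, hIC⟩ := mem_biUnion.1 hI
    obtain ⟨C', hC', hJC'⟩ := mem_biUnion.1 hJ
    rcases hT.total (mem_coe.2 hC) (mem_coe.2 hC') with h | h
    · exact (subset_or_inter_eq_empty_of_mem_components hB h hIC hJC').imp_right Or.inr
    · have := subset_or_inter_eq_empty_of_mem_components hB h hJC' hIC
      rw [inter_comm] at this
      tauto

end Nested

/-- For a connected building set `B` on `S = {1, …, n+1}`, the cones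
`ℝ_{≥0}N = ∑_{I ∈ N} ℝ_{≥0} e_I`, over all nested sets `N` of `B`, cover `ℝ^n`. -/
theorem stmt_16 (n : ℕ) (B : Finset (Finset ℕ))
    (hB : IsBuilding (Finset.Icc 1 (n + 1)) B)
    (hconn : Bmax B = {Finset.Icc 1 (n + 1)})
    (x : Fin n → ℝ) :
    ∃ N : Finset (Finset ℕ), IsNested B N ∧
      ∃ c : Finset ℕ → ℝ, (∀ J, 0 ≤ c J) ∧ x = ∑ J ∈ N, c J • eSet n J := by
  obtain ⟨P, hPS, t, ht, hx⟩ := exists_ssubset_Icc_nonneg_sum_smul_eVec n x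
  obtain ⟨T, a, hTP, hT, ha, hsum⟩ := exists_isChain_sum_smul_eq (eVec n) P t ht
  refine ⟨T.biUnion (components B),
    isNested_biUnion_components hB hconn hT fun C hC => (hTP C hC).trans_ssubset hPS,
    fun J => ∑ C ∈ T with J ∈ components B C, a C, fun J => sum_nonneg fun C _ => ha C, ?_⟩
  rw [hx, hsum, ← sum_smul_sum_eq_sum_biUnion]
  refine sum_congr rfl fun C hC => ?_
  rw [sum_eq_sum_components hB ((hTP C hC).trans hPS.subset)]
  rfl
end
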